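/- arXiv:2508.19503 — 3 statements merged into one kernel-verified Lean document; each statement's English description precedes it below -/
import Mathlib

section
/- Let g ≥ 0, r ≥ 1, d ≥ r be integers with r dividing d, (d−r)(r+1) ≥ rg, and n = ((r+1)/r)·d − g + 1 an integer. Then the width adjustment map ψ is a bijection from SSYT_C(g,r,d) to SSYT_AC(g,r,d). -/
open scoped Classical

/-! ### Words and conditions (i)-(iii) -/

/-- An `(r+1)`-ary word of length `g`: every letter lies in `{1, …, r+1}`. -/
def IsWord (g r : ℕ) (w : Fin g → ℕ) : Prop :=
  ∀ j, 1 ≤ w j ∧ w j ≤ r + 1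

/-- Condition (i): a collection of at least `g + r - d` pairwise disjoint decreasing
subsequences, each of length `r + 1`. -/
def CondI (g r d : ℕ) (w : Fin g → ℕ) : Prop :=
  ∃ S : Fin (g + r - d) → Fin (r + 1) → Fin g,
    (∀ k, StrictMono (S k) ∧ StrictAnti (w ∘ S k)) ∧
      ∀ k k', k ≠ k' → ∀ a b, S k a ≠ S k' b

/-- Condition (ii): no nondecreasing subsequence of length greater than `d / r`. -/
def CondII (g r d : ℕ) (w : Fin g → ℕ) : Prop :=
  ∀ m, d / r < m → ¬∃ js : Fin m → Fin g, StrictMono js ∧ Monotone (w ∘ js)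

/-- Condition (iii): for every `i ∈ {1, …, r}`, no `(i,i+1)`-subsequence (nondecreasing,
all letters equal to `i` or `i+1`) of length `d / r`. -/
def CondIII (g r d : ℕ) (w : Fin g → ℕ) : Prop :=
  ∀ i, 1 ≤ i → i ≤ r →
    ¬∃ js : Fin (d / r) → Fin g,
        StrictMono js ∧ Monotone (w ∘ js) ∧ ∀ a, w (js a) = i ∨ w (js a) = i + 1

/-- A word satisfies conditions (i)–(iii) for parameters `(g, r, d)`. -/
def SatisfiesConds (g r d : ℕ) (w : Fin g → ℕ) : Prop :=
  CondI g r d w ∧ CondII g r d w ∧ CondIII g r d w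

/-- The number of `(r+1)`-ary words of length `g` satisfying conditions (i)–(iii). -/
noncomputable def wordCount (g r d : ℕ) : ℕ :=
  ((Fintype.piFinset fun _ : Fin g => Finset.Icc 1 (r + 1)).filter fun w =>
      SatisfiesConds g r d w).card

/-! ### Tableaux, encoded as functions `ℕ → ℕ → ℕ` (entry `0` = empty box) -/

/-- A semistandard Young tableau: support is a Young diagram (rows left-justified,
columns top-justified), rows weakly increase, columns strictly increase.
Entries are positive; the value `0` marks an empty box. -/
def IsSSYT (T : ℕ → ℕ → ℕ) : Prop :=
  (∀ i j, T i (j + 1) ≠ 0 → T i j ≠ 0) ∧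
  (∀ i j, T (i + 1) j ≠ 0 → T i j ≠ 0) ∧
  (∀ i j, T i (j + 1) ≠ 0 → T i j ≤ T i (j + 1)) ∧
  (∀ i j, T (i + 1) j ≠ 0 → T i j < T (i + 1) j)

/-- The number of boxes of a tableau. -/
noncomputable def tabSize (T : ℕ → ℕ → ℕ) : ℕ :=
  {p : ℕ × ℕ | T p.1 p.2 ≠ 0}.ncard

/-- `T` has an `(i,i+1)`-strip of length `ℓ`: one box in each of the first `ℓ` columns
(`s j` = row of the box in column `j`), boxes weakly move up from left to right
(a box in a column strictly to the left never lies in a row strictly above a box in a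
column to its right), every box is filled with `i` or `i+1`, and every entry `i` lies
in a column strictly to the left of every entry `i+1`. -/
def HasIStrip (T : ℕ → ℕ → ℕ) (i ℓ : ℕ) : Prop :=
  ∃ s : ℕ → ℕ,
    (∀ j, j < ℓ → T (s j) j ≠ 0) ∧
    (∀ j j', j < j' → j' < ℓ → s j' ≤ s j) ∧
    (∀ j, j < ℓ → T (s j) j = i ∨ T (s j) j = i + 1) ∧
    (∀ j j', j < ℓ → j' < ℓ → T (s j) j = i → T (s j') j' = i + 1 → j < j')

/-- `SSYT_C(g,r,d)` (with `n = d + d/r + 1 - g`): SSYT of size `(d-r)(r+1) - rg`,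
entries in `{1, …, r+1}`, width at most `n - r - 1`, at least `d - g - r` columns of
height `r + 1`, and no `(i,i+1)`-strip of length `n - r - 1` for any `i ∈ {1, …, r}`. -/
def SSYT_C (g r d n : ℕ) : Set (ℕ → ℕ → ℕ) :=
  {T | IsSSYT T ∧ tabSize T = (d - r) * (r + 1) - r * g ∧
    (∀ i j, T i j ≠ 0 → T i j ≤ r + 1) ∧
    T 0 (n - r - 1) = 0 ∧
    (∀ j, j < d - g - r → T r j ≠ 0) ∧
    ∀ i, 1 ≤ i → i ≤ r → ¬HasIStrip T i (n - r - 1)}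

/-- `SSYT_AC(g,r,d)`: SSYT of size `g`, entries in `{1, …, r+1}`, width at most `d / r`,
at least `g + r - d` columns of height `r + 1`, and no `(i,i+1)`-strip of length `d / r`
for any `i ∈ {1, …, r}`. -/
def SSYT_AC (g r d : ℕ) : Set (ℕ → ℕ → ℕ) :=
  {T | IsSSYT T ∧ tabSize T = g ∧
    (∀ i j, T i j ≠ 0 → T i j ≤ r + 1) ∧
    T 0 (d / r) = 0 ∧
    (∀ j, j < g + r - d → T r j ≠ 0) ∧
    ∀ i, 1 ≤ i → i ≤ r → ¬HasIStrip T i (d / r)}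

/-- The width adjustment `ψ`: if `d < g + r`, add `g + r - d` full columns of height
`r + 1` (filled with `1, …, r+1`) on the left; if `d > g + r`, remove the leftmost
`d - g - r` columns; if `d = g + r`, do nothing. -/
def psi (g r d : ℕ) (B : ℕ → ℕ → ℕ) : ℕ → ℕ → ℕ :=
  if d ≤ g + r then
    fun i j =>
      if j < g + r - d then (if i < r + 1 then i + 1 else 0) else B i (j - (g + r - d))
  else fun i j => B i (j + (d - (g + r)))

/-- A `180°`-rotated and conjugated SSYT of content `(r, …, r)` (each of `1, …, g`
appearing exactly `r` times) and height at most `r + 1`.  The row index `i` runs over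
`0, …, r` (row `i` is the row labelled `i + 1`) and the column index `j` counts boxes
of a row starting from the *right* end.  Rows are right-justified and strictly increase
from right to left; columns are bottom-justified and weakly decrease from top to bottom. -/
def IsTrSSYT (g r : ℕ) (R : ℕ → ℕ → ℕ) : Prop :=
  (∀ i j, R i (j + 1) ≠ 0 → R i j ≠ 0) ∧
  (∀ i j, i < r → R i j ≠ 0 → R (i + 1) j ≠ 0) ∧
  (∀ i j, r + 1 ≤ i → R i j = 0) ∧
  (∀ i j, R i (j + 1) ≠ 0 → R i j < R i (j + 1)) ∧
  (∀ i j, R i j ≠ 0 → R (i + 1) j ≠ 0 → R (i + 1) j ≤ R i j) ∧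
  (∀ i j, R i j ≠ 0 → R i j ≤ g) ∧
  (∀ k, 1 ≤ k → k ≤ g → {p : ℕ × ℕ | R p.1 p.2 = k}.ncard = r)

/-- The purple tableau `φ(R)`: for `i = 1, …, g` in order, place a box labelled `i` as
far to the left as possible in the unique row among `1, …, r+1` not containing `i` in
`R`.  Equivalently, the entry of `φ(R)` in row `i`, column `j` is the `(j+1)`-st
smallest value of `{1, …, g}` not appearing in row `i` of `R`. -/
def phiMap (g r : ℕ) (R : ℕ → ℕ → ℕ) : ℕ → ℕ → ℕ := fun i j =>
  if i < r + 1 then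
    (((Finset.Icc 1 g).filter fun k => ∀ l ∈ Finset.range g, R i l ≠ k).sort (· ≤ ·)).getD j 0
  else 0

/-- A standard Young tableau of size `g`: a semistandard tableau with strictly
increasing rows whose entries are exactly `1, …, g`, each appearing once. -/
def IsSYT (g : ℕ) (Q : ℕ → ℕ → ℕ) : Prop :=
  IsSSYT Q ∧ (∀ i j, Q i (j + 1) ≠ 0 → Q i j < Q i (j + 1)) ∧
  (∀ i j, Q i j ≠ 0 → Q i j ≤ g) ∧
  (∀ k, 1 ≤ k → k ≤ g → {p : ℕ × ℕ | Q p.1 p.2 = k}.ncard = 1)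

/-- Two tableaux have the same shape. -/
def SameShape (P Q : ℕ → ℕ → ℕ) : Prop :=
  ∀ i j, P i j ≠ 0 ↔ Q i j ≠ 0

/-- An L-tableau with parameters `(g, r, d)`, encoded as the pair of its blue tableau
`B` (in grid coordinates: row `i ∈ {0, …, r}` from the top, column `j ∈ {0, …, d-r-1}`
from the left) and its red tableau `R` (row `i ∈ {0, …, r}` from the top, column `j`
counted from the right edge of the grid).  The blue entries lie in `{1, …, r+1}`, are
top- and left-justified and form an SSYT; the red entries lie in `{1, …, g}`, each
appearing exactly `r` times, are bottom- and right-justified and form a rotated,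
conjugated SSYT; together they fill the `(r+1) × (d-r)` grid (the grid cell `(i, j)`
is blue if and only if it is not red, i.e. `R i (d - r - 1 - j) = 0`). -/
def IsLTableau (g r d : ℕ) (B R : ℕ → ℕ → ℕ) : Prop :=
  IsSSYT B ∧ (∀ i j, B i j ≠ 0 → B i j ≤ r + 1) ∧
  IsTrSSYT g r R ∧
  (∀ i j, d - r ≤ j → R i j = 0) ∧
  (∀ i j, r + 1 ≤ i ∨ d - r ≤ j → B i j = 0) ∧
  (∀ i j, i < r + 1 → j < d - r → (B i j ≠ 0 ↔ R i (d - r - 1 - j) = 0))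

/-- The set `𝓛ʳ_{g,n,d}` of L-tableaux: the blue tableau is supported in the leftmost
`n - r - 1` columns and has no `(i,i+1)`-strip of length `n - r - 1` for `i ∈ {1, …, r}`. -/
def LSet (g r d n : ℕ) : Set ((ℕ → ℕ → ℕ) × (ℕ → ℕ → ℕ)) :=
  {BR | IsLTableau g r d BR.1 BR.2 ∧
    (∀ i j, n - r - 1 ≤ j → BR.1 i j = 0) ∧
    ∀ i, 1 ≤ i → i ≤ r → ¬HasIStrip BR.1 i (n - r - 1)}

/-- The set `𝒯ʳ_{g,n,d}` of pairs `(P, Q)` of the same shape with `P ∈ SSYT_AC(g,r,d)`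
and `Q` a standard Young tableau. -/
def TSet (g r d : ℕ) : Set ((ℕ → ℕ → ℕ) × (ℕ → ℕ → ℕ)) :=
  {PQ | PQ.1 ∈ SSYT_AC g r d ∧ IsSYT g PQ.2 ∧ SameShape PQ.1 PQ.2}

/-! ### Words as lists, Knuth equivalence, reading words, RSK -/

/-- The list `s` is an `(i,i+1)`-subsequence of length `ℓ` of the word `w`:
a nondecreasing subsequence all of whose letters equal `i` or `i + 1`. -/
def HasIISubseqL (w : List ℕ) (i ℓ : ℕ) : Prop :=
  ∃ s : List ℕ, s.Sublist w ∧ s.length = ℓ ∧ s.Pairwise (· ≤ ·) ∧ ∀ x ∈ s, x = i ∨ x = i + 1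

/-- Elementary Knuth transformations: `…acb… ↦ …cab…` for `a ≤ b < c`, and
`…bac… ↦ …bca…` for `a < b ≤ c`. -/
inductive KnuthStep : List ℕ → List ℕ → Prop
  | swap1 (u v : List ℕ) (a b c : ℕ) (h1 : a ≤ b) (h2 : b < c) :
      KnuthStep (u ++ a :: c :: b :: v) (u ++ c :: a :: b :: v)
  | swap2 (u v : List ℕ) (a b c : ℕ) (h1 : a < b) (h2 : b ≤ c) :
      KnuthStep (u ++ b :: a :: c :: v) (u ++ b :: c :: a :: v)

/-- Knuth equivalence: the equivalence relation generated by the elementary Knuth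
transformations. -/
def KnuthEquiv : List ℕ → List ℕ → Prop :=
  Relation.EqvGen KnuthStep

/-- View a tableau given as a list of rows as a function `ℕ → ℕ → ℕ`. -/
def tabFun (P : List (List ℕ)) : ℕ → ℕ → ℕ := fun i j => (P.getD i []).getD j 0

/-- The reading word of a tableau: concatenate the rows from bottom to top,
each row read from left to right. -/
def readingWord (P : List (List ℕ)) : List ℕ :=
  P.reverse.flatten

/-- A semistandard Young tableau presented as its list of rows (top to bottom):
rows are nonempty, weakly increasing, with positive entries; row lengths weakly
decrease; columns strictly increase. -/
def IsSSYTRows (P : List (List ℕ)) : Prop :=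
  (∀ row ∈ P, row ≠ [] ∧ row.Pairwise (· ≤ ·) ∧ ∀ x ∈ row, 0 < x) ∧
  ∀ i, i + 1 < P.length →
    (P.getD (i + 1) []).length ≤ (P.getD i []).length ∧
    ∀ j, j < (P.getD (i + 1) []).length →
      (P.getD i []).getD j 0 < (P.getD (i + 1) []).getD j 0

/-- Schensted insertion of `x` into a row: replace the leftmost entry strictly larger
than `x` (returning it as bumped), or append `x` at the end if no such entry exists. -/
def rowInsert (x : ℕ) : List ℕ → List ℕ × Option ℕ
  | [] => ([x], none)
  | y :: ys =>
    if y ≤ x then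
      let p := rowInsert x ys
      (y :: p.1, p.2)
    else (x :: ys, some y)

/-- Schensted row insertion of `x` into a tableau (given as its list of rows). -/
def tabInsert (x : ℕ) : List (List ℕ) → List (List ℕ)
  | [] => [[x]]
  | row :: rest =>
    match rowInsert x row with
    | (row', none) => row' :: rest
    | (row', some y) => row' :: tabInsert y rest

/-- The insertion tableau `P` of a word under the RSK correspondence. -/
def insertTab (w : List ℕ) : List (List ℕ) :=
  w.foldl (fun t x => tabInsert x t) []

/-- The recording tableau `Q` of a word under the RSK correspondence: the entry in box
`(i, j)` is the step at which that box was created during the insertion process. -/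
def recQ (w : List ℕ) : ℕ → ℕ → ℕ := fun i j =>
  (((List.range (w.length + 1)).find? fun k =>
      decide (j < ((insertTab (w.take k)).getD i []).length)).getD 0)

/-- The RSK correspondence, sending a word to the pair (insertion tableau, recording
tableau), both viewed as functions `ℕ → ℕ → ℕ`. -/
def RSKmap (w : List ℕ) : (ℕ → ℕ → ℕ) × (ℕ → ℕ → ℕ) :=
  (tabFun (insertTab w), recQ w)

-- auxiliary
def addC (r c : ℕ) (T : ℕ → ℕ → ℕ) : ℕ → ℕ → ℕ :=
  fun i j => if j < c then (if i < r + 1 then i + 1 else 0) else T i (j - c)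

def delC (c : ℕ) (T : ℕ → ℕ → ℕ) : ℕ → ℕ → ℕ := fun i j => T i (j + c)

lemma row_ge {T : ℕ → ℕ → ℕ} (h : IsSSYT T) : ∀ i j, T i j ≠ 0 → i + 1 ≤ T i j := by
  intro i
  induction i with
  | zero => intro j hj; omega
  | succ i ih =>
    intro j hj
    have hne := h.2.1 i j hj
    have := h.2.2.2 i j hj
    have := ih j hne
    omega

lemma zero_row {T : ℕ → ℕ → ℕ} {r : ℕ} (h : IsSSYT T)
    (hb : ∀ i j, T i j ≠ 0 → T i j ≤ r + 1) :
    ∀ i j, r + 1 ≤ i → T i j = 0 := by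
  intro i j hi
  by_contra hne
  have := row_ge h i j hne
  have := hb i j hne
  omega

lemma full_col {T : ℕ → ℕ → ℕ} {r j : ℕ} (h : IsSSYT T)
    (hb : ∀ i j, T i j ≠ 0 → T i j ≤ r + 1)
    (hcol : T r j ≠ 0) : ∀ i, i ≤ r → T i j = i + 1 := by
  have key : ∀ k, k ≤ r → T (r - k) j = (r - k) + 1 := by
    intro k
    induction k with
    | zero =>
      intro _
      have h1 := row_ge h r j hcol
      have h2 := hb r j hcol
      simp only [Nat.sub_zero]
      omega
    | succ k ih =>
      intro hk
      have hprev := ih (by omega)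
      have heq : r - k = (r - (k + 1)) + 1 := by omega
      have hne : T (r - k) j ≠ 0 := by rw [hprev]; omega
      have hne2 : T (r - (k + 1)) j ≠ 0 := h.2.1 _ j (by rw [← heq]; exact hne)
      have hlt := h.2.2.2 (r - (k + 1)) j (by rw [← heq]; exact hne)
      have := row_ge h (r - (k + 1)) j hne2
      rw [← heq, hprev] at hlt
      omega
  intro i hi
  have := key (r - i) (by omega)
  rwa [Nat.sub_sub_self hi] at this

lemma support_bound {T : ℕ → ℕ → ℕ} {r w : ℕ} (h : IsSSYT T)
    (hb : ∀ i j, T i j ≠ 0 → T i j ≤ r + 1) (hw : T 0 w = 0) :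
    ∀ i j, r + 1 ≤ i ∨ w ≤ j → T i j = 0 := by
  have hrow0 : ∀ k, T 0 (w + k) = 0 := by
    intro k
    induction k with
    | zero => exact hw
    | succ k ih =>
      by_contra hne
      exact (h.1 0 (w + k) hne) ih
  have htop : ∀ i j, T i j ≠ 0 → T 0 j ≠ 0 := by
    intro i
    induction i with
    | zero => exact fun j h' => h'
    | succ i ih => exact fun j h' => ih j (h.2.1 i j h')
  intro i j hij
  rcases hij with hi | hj
  · exact zero_row h hb i j hi
  · by_contra hne
    exact htop i j hne (by rw [show j = w + (j - w) by omega]; exact hrow0 _)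

lemma delC_addC (r c : ℕ) (T : ℕ → ℕ → ℕ) : delC c (addC r c T) = T := by
  funext i j
  simp only [delC, addC, if_neg (by omega : ¬ j + c < c), Nat.add_sub_cancel]

lemma addC_delC {T : ℕ → ℕ → ℕ} {r c : ℕ} (h : IsSSYT T)
    (hb : ∀ i j, T i j ≠ 0 → T i j ≤ r + 1)
    (hfull : ∀ j, j < c → T r j ≠ 0) : addC r c (delC c T) = T := by
  funext i j
  simp only [addC, delC]
  by_cases hj : j < c
  · rw [if_pos hj]
    by_cases hi : i < r + 1
    · rw [if_pos hi, full_col h hb (hfull j hj) i (by omega)]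
    · rw [if_neg hi, zero_row h hb i j (by omega)]
  · rw [if_neg hj, Nat.sub_add_cancel (by omega)]

lemma isSSYT_delC {T : ℕ → ℕ → ℕ} (h : IsSSYT T) (c : ℕ) : IsSSYT (delC c T) := by
  refine ⟨?_, ?_, ?_, ?_⟩
  · intro i j hne
    exact h.1 i (j + c) (by rwa [show j + c + 1 = j + 1 + c by omega])
  · intro i j hne
    exact h.2.1 i (j + c) hne
  · intro i j hne
    have := h.2.2.1 i (j + c) (by rwa [show j + c + 1 = j + 1 + c by omega])
    simpa [delC, show j + c + 1 = j + 1 + c by omega] using this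
  · intro i j hne
    exact h.2.2.2 i (j + c) hne

lemma entries_addC {T : ℕ → ℕ → ℕ} {r c : ℕ}
    (hb : ∀ i j, T i j ≠ 0 → T i j ≤ r + 1) :
    ∀ i j, addC r c T i j ≠ 0 → addC r c T i j ≤ r + 1 := by
  intro i j
  simp only [addC]
  by_cases hj : j < c
  · rw [if_pos hj]
    by_cases hi : i < r + 1
    · rw [if_pos hi]; omega
    · rw [if_neg hi]; omega
  · rw [if_neg hj]; exact hb i (j - c)

lemma isSSYT_addC {T : ℕ → ℕ → ℕ} {r c : ℕ} (h : IsSSYT T)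
    (hb : ∀ i j, T i j ≠ 0 → T i j ≤ r + 1) : IsSSYT (addC r c T) := by
  have hz := zero_row h hb
  have hge := row_ge h
  refine ⟨?_, ?_, ?_, ?_⟩
  · intro i j
    simp only [addC]
    by_cases hj1 : j + 1 < c
    · rw [if_pos hj1, if_pos (show j < c by omega)]
      exact id
    · rw [if_neg hj1]
      by_cases hj : j < c
      · rw [if_pos hj]
        intro hne
        have hi : i < r + 1 := by
          by_contra hi
          exact hne (hz i (j + 1 - c) (by omega))
        rw [if_pos hi]; omega
      · rw [if_neg hj]
        intro hne
        exact h.1 i (j - c) (by rwa [show j - c + 1 = j + 1 - c by omega])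
  · intro i j
    simp only [addC]
    by_cases hj : j < c
    · rw [if_pos hj, if_pos hj]
      intro hne
      have hi : i + 1 < r + 1 := by by_contra hi; rw [if_neg hi] at hne; exact hne rfl
      rw [if_pos (by omega)]; omega
    · rw [if_neg hj, if_neg hj]
      exact h.2.1 i (j - c)
  · intro i j
    simp only [addC]
    by_cases hj1 : j + 1 < c
    · rw [if_pos hj1, if_pos (show j < c by omega)]
      exact fun _ => le_refl _
    · rw [if_neg hj1]
      by_cases hj : j < c
      · rw [if_pos hj]
        intro hne
        have hj1c : j + 1 - c = 0 := by omega
        rw [hj1c] at hne ⊢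
        have hgei := hge i 0 hne
        have hi : i < r + 1 := by
          by_contra hi
          exact hne (hz i 0 (by omega))
        rw [if_pos hi]
        omega
      · rw [if_neg hj]
        intro hne
        have := h.2.2.1 i (j - c) (by rwa [show j - c + 1 = j + 1 - c by omega])
        rwa [show j - c + 1 = j + 1 - c by omega] at this
  · intro i j
    simp only [addC]
    by_cases hj : j < c
    · rw [if_pos hj, if_pos hj]
      intro hne
      have hi1 : i + 1 < r + 1 := by by_contra hi; rw [if_neg hi] at hne; exact hne rfl
      rw [if_pos (by omega), if_pos hi1]
      omega
    · rw [if_neg hj, if_neg hj]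
      exact h.2.2.2 i (j - c)

lemma strip_restrict {U : ℕ → ℕ → ℕ} {c i w : ℕ}
    (h : HasIStrip U i (w + c)) : HasIStrip (delC c U) i w := by
  obtain ⟨s, hne, hdec, hent, hord⟩ := h
  refine ⟨fun j => s (j + c), fun j hj => hne (j + c) (by omega),
    fun j j' hjj hj' => hdec (j + c) (j' + c) (by omega) (by omega),
    fun j hj => hent (j + c) (by omega), fun j j' hj hj' ha hb => ?_⟩
  have := hord (j + c) (j' + c) (by omega) (by omega) ha hb
  omega

lemma strip_extend {U : ℕ → ℕ → ℕ} {r c i w : ℕ} (h : IsSSYT U)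
    (hb : ∀ i j, U i j ≠ 0 → U i j ≤ r + 1)
    (hfull : ∀ j, j < c → U r j ≠ 0) (hi1 : 1 ≤ i) (hir : i ≤ r)
    (hs : HasIStrip (delC c U) i w) : HasIStrip U i (w + c) := by
  obtain ⟨s, hne, hdec, hent, hord⟩ := hs
  have hcol : ∀ j, j < c → ∀ a, a ≤ r → U a j = a + 1 := fun j hj => full_col h hb (hfull j hj)
  have hne' : ∀ j, j < w → U (s j) (j + c) ≠ 0 := hne
  have hent' : ∀ j, j < w → U (s j) (j + c) = i ∨ U (s j) (j + c) = i + 1 := hent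
  have hord' : ∀ j j', j < w → j' < w → U (s j) (j + c) = i → U (s j') (j' + c) = i + 1 → j < j' :=
    hord
  by_cases hex : ∃ j, j < w ∧ U (s j) (j + c) = i
  · obtain ⟨j0, hj0, hj0i⟩ := hex
    have hs0 : s 0 ≤ i - 1 := by
      have h0w : 0 < w := by omega
      have he0i : U (s 0) (0 + c) = i := by
        rcases hent' 0 h0w with h' | h'
        · exact h'
        · exact absurd (hord' j0 0 hj0 h0w hj0i h') (by omega)
      have := row_ge h (s 0) (0 + c) (hne' 0 h0w)
      omega
    refine ⟨fun j => if j < c then i - 1 else s (j - c), ?_, ?_, ?_, ?_⟩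
    · intro j hj
      by_cases hjc : j < c
      · simp only [if_pos hjc]
        rw [hcol j hjc (i - 1) (by omega)]
        omega
      · simp only [if_neg hjc]
        have := hne' (j - c) (by omega)
        rwa [Nat.sub_add_cancel (by omega)] at this
    · intro j j' hjj hj'w
      by_cases hj'c : j' < c
      · simp only [if_pos (show j < c by omega), if_pos hj'c, le_refl]
      · simp only [if_neg hj'c]
        by_cases hjc : j < c
        · simp only [if_pos hjc]
          calc s (j' - c) ≤ s 0 := by
                rcases Nat.eq_zero_or_pos (j' - c) with h0 | h0
                · rw [h0]
                · exact hdec 0 (j' - c) h0 (by omega)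
            _ ≤ i - 1 := hs0
        · simp only [if_neg hjc]
          exact hdec (j - c) (j' - c) (by omega) (by omega)
    · intro j hj
      by_cases hjc : j < c
      · simp only [if_pos hjc]
        rw [hcol j hjc (i - 1) (by omega)]
        left; omega
      · simp only [if_neg hjc]
        have := hent' (j - c) (by omega)
        rwa [Nat.sub_add_cancel (by omega)] at this
    · intro a b haw hbw hA hB
      simp only at hA hB
      by_cases hbc : b < c
      · rw [if_pos hbc, hcol b hbc (i - 1) (by omega)] at hB
        omega
      · by_cases hac : a < c
        · omega
        · rw [if_neg hac] at hA
          rw [if_neg hbc] at hB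
          have hA' : U (s (a - c)) ((a - c) + c) = i := by
            rwa [Nat.sub_add_cancel (by omega)]
          have hB' : U (s (b - c)) ((b - c) + c) = i + 1 := by
            rwa [Nat.sub_add_cancel (by omega)]
          have := hord' (a - c) (b - c) (by omega) (by omega) hA' hB'
          omega
  · push_neg at hex
    have hall : ∀ j, j < w → U (s j) (j + c) = i + 1 := by
      intro j hj
      rcases hent' j hj with h' | h'
      · exact absurd h' (hex j hj)
      · exact h'
    have hrow : ∀ j, j < w → s j ≤ i := by
      intro j hj
      have := row_ge h (s j) (j + c) (hne' j hj)
      have := hall j hj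
      omega
    refine ⟨fun j => if j < c then i else s (j - c), ?_, ?_, ?_, ?_⟩
    · intro j hj
      by_cases hjc : j < c
      · simp only [if_pos hjc]
        rw [hcol j hjc i hir]
        omega
      · simp only [if_neg hjc]
        have := hne' (j - c) (by omega)
        rwa [Nat.sub_add_cancel (by omega)] at this
    · intro j j' hjj hj'w
      by_cases hj'c : j' < c
      · simp only [if_pos (show j < c by omega), if_pos hj'c, le_refl]
      · simp only [if_neg hj'c]
        by_cases hjc : j < c
        · simp only [if_pos hjc]
          exact hrow (j' - c) (by omega)
        · simp only [if_neg hjc]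
          exact hdec (j - c) (j' - c) (by omega) (by omega)
    · intro j hj
      by_cases hjc : j < c
      · simp only [if_pos hjc]
        rw [hcol j hjc i hir]
        right; rfl
      · simp only [if_neg hjc]
        have := hent' (j - c) (by omega)
        rwa [Nat.sub_add_cancel (by omega)] at this
    · intro a b haw hbw hA hB
      simp only at hA hB
      by_cases hac : a < c
      · rw [if_pos hac, hcol a hac i hir] at hA
        omega
      · rw [if_neg hac] at hA
        have hA' : U (s (a - c)) ((a - c) + c) = i := by rwa [Nat.sub_add_cancel (by omega)]
        have := hall (a - c) (by omega)
        omega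

lemma tabSize_addC {T : ℕ → ℕ → ℕ} {r c w : ℕ}
    (hsupp : ∀ i j, r + 1 ≤ i ∨ w ≤ j → T i j = 0) :
    tabSize (addC r c T) = (r + 1) * c + tabSize T := by
  have hTfin : {p : ℕ × ℕ | T p.1 p.2 ≠ 0}.Finite := by
    apply Set.Finite.subset ((Set.finite_Iio (r + 1)).prod (Set.finite_Iio w))
    rintro ⟨i, j⟩ hp
    simp only [Set.mem_setOf_eq] at hp
    refine ⟨?_, ?_⟩ <;> simp only [Set.mem_Iio] <;> by_contra hcon <;>
      exact hp (hsupp i j (by omega))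
  have hunion : {p : ℕ × ℕ | addC r c T p.1 p.2 ≠ 0} =
      (Set.Iio (r + 1) ×ˢ Set.Iio c) ∪
        ((fun p : ℕ × ℕ => (p.1, p.2 + c)) '' {p : ℕ × ℕ | T p.1 p.2 ≠ 0}) := by
    ext ⟨i, j⟩
    simp only [Set.mem_setOf_eq, Set.mem_union, Set.mem_prod, Set.mem_Iio,
      Set.mem_image, addC, Prod.mk.injEq, Prod.exists]
    constructor
    · intro hne
      by_cases hj : j < c
      · rw [if_pos hj] at hne
        left
        refine ⟨?_, hj⟩
        by_contra hi
        rw [if_neg hi] at hne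
        exact hne rfl
      · rw [if_neg hj] at hne
        right
        exact ⟨i, j - c, hne, rfl, by omega⟩
    · rintro (⟨hi, hj⟩ | ⟨a, b, hab, rfl, rfl⟩)
      · rw [if_pos hj, if_pos hi]; omega
      · rw [if_neg (by omega), Nat.add_sub_cancel]
        exact hab
  have hdisj : Disjoint (Set.Iio (r + 1) ×ˢ Set.Iio c)
      ((fun p : ℕ × ℕ => (p.1, p.2 + c)) '' {p : ℕ × ℕ | T p.1 p.2 ≠ 0}) := by
    rw [Set.disjoint_left]
    rintro ⟨i, j⟩ h1 h2
    simp only [Set.mem_prod, Set.mem_Iio] at h1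
    simp only [Set.mem_image, Prod.mk.injEq, Prod.exists] at h2
    obtain ⟨a, b, _, _, h5⟩ := h2
    omega
  have hS2card : ((fun p : ℕ × ℕ => (p.1, p.2 + c)) '' {p : ℕ × ℕ | T p.1 p.2 ≠ 0}).ncard
      = tabSize T := by
    apply Set.ncard_image_of_injective
    rintro ⟨a, b⟩ ⟨a', b'⟩ hpp
    simp only [Prod.mk.injEq] at hpp
    simp only [Prod.mk.injEq]
    omega
  have hS1card : (Set.Iio (r + 1) ×ˢ Set.Iio c : Set (ℕ × ℕ)).ncard = (r + 1) * c := by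
    have he : (Set.Iio (r + 1) ×ˢ Set.Iio c : Set (ℕ × ℕ)) =
        ↑(Finset.range (r + 1) ×ˢ Finset.range c) := by
      ext ⟨i, j⟩
      simp [Finset.mem_product]
    rw [he, Set.ncard_coe_finset, Finset.card_product, Finset.card_range, Finset.card_range]
  rw [tabSize, hunion, Set.ncard_union_eq hdisj ((Set.finite_Iio _).prod (Set.finite_Iio _))
    (hTfin.image _), hS1card, hS2card, tabSize]

/-- The width adjustment `ψ` is a bijection from `SSYT_C(g,r,d)` to
`SSYT_AC(g,r,d)`. -/
theorem psi_bijOn (g r d n : ℕ) (hr : 1 ≤ r) (hd : r ≤ d) (hdvd : r ∣ d)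
    (hineq : r * g ≤ (d - r) * (r + 1)) (hn : n + g = d + d / r + 1) :
    Set.BijOn (psi g r d) (SSYT_C g r d n) (SSYT_AC g r d) := by
  obtain ⟨q, hdq⟩ := hdvd
  have hr0 : 0 < r := hr
  have hq : d / r = q := by rw [hdq, Nat.mul_div_cancel_left q hr0]
  have hq1 : 1 ≤ q := by
    rcases Nat.eq_zero_or_pos q with rfl | h
    · simp at hdq; omega
    · exact h
  rw [hq] at hn
  have hkey : g + r + 1 ≤ d + q := by
    obtain ⟨q0, rfl⟩ : ∃ q0, q = q0 + 1 := ⟨q - 1, by omega⟩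
    have h5 : d = r * q0 + r := by rw [hdq]; ring
    have hdr : d - r = r * q0 := by omega
    have h2 : r * g ≤ r * (q0 * (r + 1)) := by
      calc r * g ≤ (d - r) * (r + 1) := hineq
        _ = r * (q0 * (r + 1)) := by rw [hdr]; ring
    have h3 : g ≤ q0 * (r + 1) := Nat.le_of_mul_le_mul_left h2 hr0
    have h4 : q0 * (r + 1) = q0 * r + q0 := by ring
    have h6 : q0 * r = r * q0 := by ring
    omega
  by_cases hcase : d ≤ g + r
  case pos =>
    set c := g + r - d with hc
    have hpsi : ∀ B : ℕ → ℕ → ℕ, psi g r d B = addC r c B := by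
      intro B
      unfold psi addC
      rw [if_pos hcase, hc]
    have hwsum : (n - r - 1) + c = q := by omega
    have harith : (r + 1) * c + ((d - r) * (r + 1) - r * g) = g := by
      rw [hc]; zify [hcase, hd, hineq]; ring
    refine ⟨?_, ?_, ?_⟩
    · -- MapsTo
      intro T hT
      simp only [SSYT_C, Set.mem_setOf_eq] at hT
      obtain ⟨hT1, hT2, hT3, hT4, hT5, hT6⟩ := hT
      have hsupp : ∀ i j, r + 1 ≤ i ∨ (n - r - 1) ≤ j → T i j = 0 :=
        support_bound hT1 hT3 hT4
      rw [hpsi T]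
      simp only [SSYT_AC, Set.mem_setOf_eq]
      refine ⟨isSSYT_addC hT1 hT3, ?_, entries_addC hT3, ?_, ?_, ?_⟩
      · rw [tabSize_addC hsupp, hT2]
        exact harith
      · show addC r c T 0 (d / r) = 0
        rw [hq]
        simp only [addC, if_neg (show ¬ q < c by omega)]
        rw [show q - c = n - r - 1 by omega]
        exact hT4
      · intro j hj
        simp only [addC, if_pos (show j < c by omega), if_pos (show r < r + 1 by omega)]
        omega
      · intro i hi1 hir hstrip
        rw [hq, show q = (n - r - 1) + c by omega] at hstrip
        have h' := strip_restrict hstrip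
        rw [delC_addC] at h'
        exact hT6 i hi1 hir h'
    · -- InjOn
      intro T _ T' _ heq
      rw [hpsi T, hpsi T'] at heq
      calc T = delC c (addC r c T) := (delC_addC r c T).symm
        _ = delC c (addC r c T') := by rw [heq]
        _ = T' := delC_addC r c T'
    · -- SurjOn
      intro P hP
      simp only [SSYT_AC, Set.mem_setOf_eq] at hP
      obtain ⟨hP1, hP2, hP3, hP4, hP5, hP6⟩ := hP
      rw [hq] at hP4 hP6
      have hfullP : ∀ j, j < c → P r j ≠ 0 := fun j hj => hP5 j (by omega)
      have hsuppP : ∀ i j, r + 1 ≤ i ∨ q ≤ j → P i j = 0 := support_bound hP1 hP3 hP4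
      have hEq : addC r c (delC c P) = P := addC_delC hP1 hP3 hfullP
      have hmem : delC c P ∈ SSYT_C g r d n := by
        simp only [SSYT_C, Set.mem_setOf_eq]
        refine ⟨isSSYT_delC hP1 c, ?_, fun i j hne => hP3 i (j + c) hne, ?_, ?_, ?_⟩
        · have E := tabSize_addC (T := delC c P) (r := r) (c := c) (w := q)
            (fun i j hij => hsuppP i (j + c) (by omega))
          rw [hEq, hP2] at E
          omega
        · show P 0 ((n - r - 1) + c) = 0
          rw [hwsum]
          exact hP4
        · intro j hj
          exact absurd hj (by omega)
        · intro i hi1 hir hstrip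
          have h' := strip_extend hP1 hP3 hfullP hi1 hir hstrip
          rw [hwsum] at h'
          exact hP6 i hi1 hir h'
      exact ⟨delC c P, hmem, by rw [hpsi]; exact hEq⟩
  case neg =>
    set c := d - (g + r) with hc
    have hpsi : ∀ B : ℕ → ℕ → ℕ, psi g r d B = delC c B := by
      intro B
      unfold psi delC
      rw [if_neg hcase, hc]
    have hgr : g + r < d := by omega
    have hwsum : q + c = n - r - 1 := by omega
    have harith : (d - r) * (r + 1) - r * g = (r + 1) * c + g := by
      rw [hc]; zify [le_of_lt hgr, hd, hineq]; ring
    refine ⟨?_, ?_, ?_⟩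
    · -- MapsTo
      intro T hT
      simp only [SSYT_C, Set.mem_setOf_eq] at hT
      obtain ⟨hT1, hT2, hT3, hT4, hT5, hT6⟩ := hT
      have hfullT : ∀ j, j < c → T r j ≠ 0 := fun j hj => hT5 j (by omega)
      have hsuppT : ∀ i j, r + 1 ≤ i ∨ (n - r - 1) ≤ j → T i j = 0 :=
        support_bound hT1 hT3 hT4
      have hEq : addC r c (delC c T) = T := addC_delC hT1 hT3 hfullT
      rw [hpsi T]
      simp only [SSYT_AC, Set.mem_setOf_eq]
      refine ⟨isSSYT_delC hT1 c, ?_, fun i j hne => hT3 i (j + c) hne, ?_, ?_, ?_⟩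
      · have E := tabSize_addC (T := delC c T) (r := r) (c := c) (w := q)
          (fun i j hij => hsuppT i (j + c) (by omega))
        rw [hEq, hT2] at E
        omega
      · show T 0 ((d / r) + c) = 0
        rw [hq, hwsum]
        exact hT4
      · intro j hj
        exact absurd hj (by omega)
      · intro i hi1 hir hstrip
        rw [hq] at hstrip
        have h' := strip_extend hT1 hT3 hfullT hi1 hir hstrip
        rw [hwsum] at h'
        exact hT6 i hi1 hir h'
    · -- InjOn
      intro T hT T' hT' heq
      simp only [SSYT_C, Set.mem_setOf_eq] at hT hT'
      obtain ⟨hT1, -, hT3, -, hT5, -⟩ := hT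
      obtain ⟨hT1', -, hT3', -, hT5', -⟩ := hT'
      rw [hpsi T, hpsi T'] at heq
      calc T = addC r c (delC c T) :=
            (addC_delC hT1 hT3 (fun j hj => hT5 j (by omega))).symm
        _ = addC r c (delC c T') := by rw [heq]
        _ = T' := addC_delC hT1' hT3' (fun j hj => hT5' j (by omega))
    · -- SurjOn
      intro P hP
      simp only [SSYT_AC, Set.mem_setOf_eq] at hP
      obtain ⟨hP1, hP2, hP3, hP4, hP5, hP6⟩ := hP
      rw [hq] at hP4 hP6
      have hsuppP : ∀ i j, r + 1 ≤ i ∨ q ≤ j → P i j = 0 := support_bound hP1 hP3 hP4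
      have hmem : addC r c P ∈ SSYT_C g r d n := by
        simp only [SSYT_C, Set.mem_setOf_eq]
        refine ⟨isSSYT_addC hP1 hP3, ?_, entries_addC hP3, ?_, ?_, ?_⟩
        · rw [tabSize_addC hsuppP, hP2]
          omega
        · show addC r c P 0 (n - r - 1) = 0
          simp only [addC, if_neg (show ¬ n - r - 1 < c by omega)]
          rw [show n - r - 1 - c = q by omega]
          exact hP4
        · intro j hj
          simp only [addC, if_pos (show j < c by omega), if_pos (show r < r + 1 by omega)]
          omega
        · intro i hi1 hir hstrip
          rw [show n - r - 1 = q + c by omega] at hstrip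
          have h' := strip_restrict hstrip
          rw [delC_addC] at h'
          exact hP6 i hi1 hir h'
      exact ⟨addC r c P, hmem, by rw [hpsi]; exact delC_addC r c P⟩
end

section
/- Let g ≥ 0 and r ≥ 1 be integers. Then the map φ is a bijection from TrSSYT^{180°}(g,r) to SYT(g,r); moreover, for every R ∈ TrSSYT^{180°}(g,r), the shapes of R and φ(R) are complementary inside the (r+1)×g rectangle. -/
open scoped Classical

/-! ### Auxiliary machinery for Statement 3 -/

/-- Enumerate a finset of naturals in increasing order; `0` beyond the end. -/
noncomputable def enumF (S : Finset ℕ) : ℕ → ℕ := fun j => (S.sort (· ≤ ·)).getD j 0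

lemma enumF_eq_zero {S : Finset ℕ} {j : ℕ} (h : S.card ≤ j) : enumF S j = 0 := by
  unfold enumF
  exact List.getD_eq_default _ _ (by rwa [Finset.length_sort])

lemma enumF_mem {S : Finset ℕ} {j : ℕ} (h : j < S.card) : enumF S j ∈ S := by
  unfold enumF
  have hl : j < (S.sort (· ≤ ·)).length := by rwa [Finset.length_sort]
  rw [List.getD_eq_getElem _ _ hl]
  exact (Finset.mem_sort _).1 (List.getElem_mem hl)

lemma enumF_strictMono {S : Finset ℕ} {j j' : ℕ} (h : j < j') (h' : j' < S.card) :
    enumF S j < enumF S j' := by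
  unfold enumF
  have hl' : j' < (S.sort (· ≤ ·)).length := by rwa [Finset.length_sort]
  have hl : j < (S.sort (· ≤ ·)).length := lt_trans (by omega) hl'
  rw [List.getD_eq_getElem _ _ hl, List.getD_eq_getElem _ _ hl']
  have := (Finset.sortedLT_sort S).pairwise.rel_get_of_lt (a := ⟨j, hl⟩) (b := ⟨j', hl'⟩) (by exact h)
  simpa using this

lemma enumF_pos {S : Finset ℕ} (hpos : ∀ x ∈ S, 0 < x) {j : ℕ} (h : j < S.card) :
    0 < enumF S j := hpos _ (enumF_mem h)

lemma enumF_ne_zero_iff {S : Finset ℕ} (hpos : ∀ x ∈ S, 0 < x) {j : ℕ} :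
    enumF S j ≠ 0 ↔ j < S.card := by
  constructor
  · intro h
    by_contra hj
    exact h (enumF_eq_zero (by omega))
  · intro h
    have := enumF_pos hpos h
    omega

lemma enumF_surj {S : Finset ℕ} {k : ℕ} (hk : k ∈ S) : ∃ j < S.card, enumF S j = k := by
  have : k ∈ S.sort (· ≤ ·) := (Finset.mem_sort _).2 hk
  obtain ⟨n, hn, he⟩ := List.getElem_of_mem this
  refine ⟨n, by rwa [Finset.length_sort] at hn, ?_⟩
  unfold enumF
  rw [List.getD_eq_getElem _ _ hn, he]

lemma filter_le_enumF {S : Finset ℕ} {j : ℕ} (h : j < S.card) :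
    S.filter (· ≤ enumF S j) = (Finset.range (j + 1)).image (enumF S) := by
  ext x
  simp only [Finset.mem_filter, Finset.mem_image, Finset.mem_range]
  constructor
  · rintro ⟨hx, hle⟩
    obtain ⟨j'', hj'', he⟩ := enumF_surj hx
    refine ⟨j'', ?_, he⟩
    by_contra hgt
    have : enumF S j < enumF S j'' := enumF_strictMono (by omega) hj''
    omega
  · rintro ⟨j', hj', rfl⟩
    have hj'c : j' < S.card := by omega
    refine ⟨enumF_mem hj'c, ?_⟩
    rcases Nat.lt_or_ge j' j with hlt | hge
    · exact le_of_lt (enumF_strictMono hlt h)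
    · have : j' = j := by omega
      subst this; exact le_refl _

lemma card_filter_le_enumF {S : Finset ℕ} {j : ℕ} (h : j < S.card) :
    (S.filter (· ≤ enumF S j)).card = j + 1 := by
  rw [filter_le_enumF h, Finset.card_image_of_injOn, Finset.card_range]
  intro a ha b hb hab
  simp only [Finset.coe_range, Set.mem_Iio] at ha hb
  by_contra hne
  rcases Nat.lt_or_ge a b with hlt | hge
  · have := enumF_strictMono hlt (show b < S.card by omega); omega
  · have := enumF_strictMono (show b < a by omega) (show a < S.card by omega); omega

lemma enumF_lt_of_card {S : Finset ℕ} {b j : ℕ} (h : j + 1 ≤ (S.filter (· < b)).card) :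
    j < S.card ∧ enumF S j < b := by
  have hsub : (S.filter (· < b)).card ≤ S.card := Finset.card_le_card (Finset.filter_subset _ _)
  have hj : j < S.card := by omega
  refine ⟨hj, ?_⟩
  by_contra hge
  push_neg at hge
  have hsub2 : S.filter (· < b) ⊆ (Finset.range j).image (enumF S) := by
    intro x hx
    simp only [Finset.mem_filter] at hx
    obtain ⟨j'', hj'', he⟩ := enumF_surj hx.1
    simp only [Finset.mem_image, Finset.mem_range]
    refine ⟨j'', ?_, he⟩
    by_contra hgt
    rcases Nat.lt_or_ge j j'' with hlt | _
    · have := enumF_strictMono hlt hj''; omega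
    · have : j'' = j := by omega
      subst this; omega
  have := Finset.card_le_card hsub2
  have := Finset.card_image_le (f := enumF S) (s := Finset.range j)
  rw [Finset.card_range] at this
  omega

lemma enumF_le_of_card {S : Finset ℕ} {b j : ℕ} (h : j + 1 ≤ (S.filter (· ≤ b)).card) :
    j < S.card ∧ enumF S j ≤ b := by
  have hsub : (S.filter (· ≤ b)).card ≤ S.card := Finset.card_le_card (Finset.filter_subset _ _)
  have hj : j < S.card := by omega
  refine ⟨hj, ?_⟩
  by_contra hge
  push_neg at hge
  have hsub2 : S.filter (· ≤ b) ⊆ (Finset.range j).image (enumF S) := by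
    intro x hx
    simp only [Finset.mem_filter] at hx
    obtain ⟨j'', hj'', he⟩ := enumF_surj hx.1
    simp only [Finset.mem_image, Finset.mem_range]
    refine ⟨j'', ?_, he⟩
    by_contra hgt
    rcases Nat.lt_or_ge j j'' with hlt | _
    · have := enumF_strictMono hlt hj''; omega
    · have : j'' = j := by omega
      subst this; omega
  have := Finset.card_le_card hsub2
  have := Finset.card_image_le (f := enumF S) (s := Finset.range j)
  rw [Finset.card_range] at this
  omega

/-- A "nice" row: left-justified, strictly increasing, entries in `{1,…,g}`. -/
def NiceRow (g : ℕ) (f : ℕ → ℕ) : Prop :=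
  (∀ j, f (j + 1) ≠ 0 → f j ≠ 0) ∧ (∀ j, f (j + 1) ≠ 0 → f j < f (j + 1)) ∧
  (∀ j, f j ≠ 0 → f j ≤ g)

lemma nice_mono {g : ℕ} {f : ℕ → ℕ} (h : NiceRow g f) :
    ∀ j' j, j < j' → f j' ≠ 0 → f j ≠ 0 ∧ f j < f j' := by
  intro j'
  induction j' with
  | zero => omega
  | succ n ih =>
    intro j hj hne
    have h1 : f n ≠ 0 := h.1 n hne
    have h2 : f n < f (n + 1) := h.2.1 n hne
    rcases Nat.lt_or_ge j n with hlt | hge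
    · obtain ⟨a, b⟩ := ih j hlt h1
      exact ⟨a, by omega⟩
    · have : j = n := by omega
      subst this; exact ⟨h1, h2⟩

lemma nice_lb {g : ℕ} {f : ℕ → ℕ} (h : NiceRow g f) {j : ℕ} (hne : f j ≠ 0) :
    j + 1 ≤ f j := by
  induction j with
  | zero => omega
  | succ n ih =>
    have h1 : f n ≠ 0 := h.1 n hne
    have h2 : f n < f (n + 1) := h.2.1 n hne
    have := ih h1
    omega

lemma nice_lt_g {g : ℕ} {f : ℕ → ℕ} (h : NiceRow g f) {j : ℕ} (hne : f j ≠ 0) : j < g := by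
  have := nice_lb h hne
  have := h.2.2 j hne
  omega

/-- The set of values in `{1,…,g}` missing from a row. -/
noncomputable def missS (g : ℕ) (f : ℕ → ℕ) : Finset ℕ :=
  (Finset.Icc 1 g).filter fun k => ∀ l ∈ Finset.range g, f l ≠ k

/-- The set of values in `{1,…,g}` present in a row. -/
noncomputable def presS (g : ℕ) (f : ℕ → ℕ) : Finset ℕ :=
  (Finset.Icc 1 g).filter fun k => ∃ l ∈ Finset.range g, f l = k

lemma missS_pos {g : ℕ} {f : ℕ → ℕ} : ∀ x ∈ missS g f, 0 < x := by
  intro x hx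
  simp only [missS, Finset.mem_filter, Finset.mem_Icc] at hx
  omega

lemma presS_pos {g : ℕ} {f : ℕ → ℕ} : ∀ x ∈ presS g f, 0 < x := by
  intro x hx
  simp only [presS, Finset.mem_filter, Finset.mem_Icc] at hx
  omega

lemma missS_card_le {g : ℕ} {f : ℕ → ℕ} : (missS g f).card ≤ g := by
  have : (missS g f).card ≤ (Finset.Icc 1 g).card :=
    Finset.card_le_card (Finset.filter_subset _ _)
  simpa [Nat.card_Icc] using this

lemma mem_presS_iff {g : ℕ} {f : ℕ → ℕ} (h : NiceRow g f) {k : ℕ} :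
    k ∈ presS g f ↔ ∃ l, f l = k ∧ k ≠ 0 := by
  simp only [presS, Finset.mem_filter, Finset.mem_Icc, Finset.mem_range]
  constructor
  · rintro ⟨⟨h1, h2⟩, l, hl, rfl⟩
    exact ⟨l, rfl, by omega⟩
  · rintro ⟨l, rfl, hk⟩
    exact ⟨⟨by omega, h.2.2 l hk⟩, l, nice_lt_g h hk, rfl⟩

lemma mem_missS_iff {g : ℕ} {f : ℕ → ℕ} (h : NiceRow g f) {k : ℕ} :
    k ∈ missS g f ↔ (1 ≤ k ∧ k ≤ g ∧ ∀ l, f l ≠ k) := by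
  simp only [missS, Finset.mem_filter, Finset.mem_Icc, Finset.mem_range]
  constructor
  · rintro ⟨⟨h1, h2⟩, hall⟩
    refine ⟨h1, h2, fun l hl => ?_⟩
    have hne : f l ≠ 0 := by omega
    exact hall l (nice_lt_g h hne) hl
  · rintro ⟨h1, h2, hall⟩
    exact ⟨⟨h1, h2⟩, fun l _ => hall l⟩

lemma downclosed_eq_range (F : Finset ℕ) (h : ∀ a b, a ≤ b → b ∈ F → a ∈ F) :
    F = Finset.range F.card := by
  have hsub : F ⊆ Finset.range F.card := by
    intro x hx
    rw [Finset.mem_range]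
    by_contra hge
    push_neg at hge
    have : Finset.range (x + 1) ⊆ F := by
      intro y hy
      rw [Finset.mem_range] at hy
      exact h y x (by omega) hx
    have := Finset.card_le_card this
    rw [Finset.card_range] at this
    omega
  exact Finset.eq_of_subset_of_card_le hsub (by rw [Finset.card_range])

/-- A nice row is recovered by enumerating its value set. -/
lemma nice_eq_enum {g : ℕ} {f : ℕ → ℕ} (h : NiceRow g f) :
    ∀ j, f j = enumF (presS g f) j := by
  -- support is an initial segment
  set F : Finset ℕ := (Finset.range g).filter (fun j => f j ≠ 0) with hF
  have hdc : ∀ a b, a ≤ b → b ∈ F → a ∈ F := by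
    intro a b hab hb
    simp only [hF, Finset.mem_filter, Finset.mem_range] at hb ⊢
    rcases Nat.lt_or_ge a b with hlt | hge
    · obtain ⟨hne, _⟩ := nice_mono h b a hlt hb.2
      exact ⟨by omega, hne⟩
    · have : a = b := by omega
      subst this; exact hb
  set t := F.card with ht
  have hFr : F = Finset.range t := downclosed_eq_range F hdc
  have hsupp : ∀ j, f j ≠ 0 ↔ j < t := by
    intro j
    constructor
    · intro hne
      have : j ∈ F := by
        simp only [hF, Finset.mem_filter, Finset.mem_range]
        exact ⟨nice_lt_g h hne, hne⟩
      rw [hFr, Finset.mem_range] at this; exact this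
    · intro hj
      have : j ∈ F := by rw [hFr, Finset.mem_range]; exact hj
      simp only [hF, Finset.mem_filter] at this
      exact this.2
  -- the list of values
  set l1 : List ℕ := (List.range t).map f with hl1
  have hlen1 : l1.length = t := by simp [hl1]
  have hget1 : ∀ j (hj : j < t), l1.getD j 0 = f j := by
    intro j hj
    rw [List.getD_eq_getElem _ _ (by simpa [hlen1] using hj)]
    simp [hl1]
  have hsorted : l1.Pairwise (· < ·) := by
    rw [List.pairwise_iff_getElem]
    intro a b ha hb hab
    rw [hlen1] at ha hb
    simp only [hl1, List.getElem_map, List.getElem_range]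
    exact (nice_mono h b a hab ((hsupp _).2 hb)).2
  have hnodup : l1.Nodup := hsorted.nodup
  have htofin : l1.toFinset = presS g f := by
    ext x
    simp only [List.mem_toFinset, hl1, List.mem_map, List.mem_range]
    rw [mem_presS_iff h]
    constructor
    · rintro ⟨j, hj, rfl⟩
      exact ⟨j, rfl, by have := (hsupp j).2 hj; omega⟩
    · rintro ⟨j, rfl, hne⟩
      exact ⟨j, (hsupp j).1 hne, rfl⟩
  have hperm : l1.Perm ((presS g f).sort (· ≤ ·)) :=
    List.perm_of_nodup_nodup_toFinset_eq hnodup (Finset.sort_nodup _ _)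
      (by rw [htofin]; ext x; simp [Finset.mem_sort])
  have heq : l1 = (presS g f).sort (· ≤ ·) :=
    List.Perm.eq_of_pairwise' (hsorted.imp le_of_lt) (Finset.pairwise_sort _ _) hperm
  have hcard : (presS g f).card = t := by
    rw [← Finset.length_sort (· ≤ ·), ← heq, hlen1]
  intro j
  rcases Nat.lt_or_ge j t with hj | hj
  · rw [← hget1 j hj, heq]; rfl
  · have h0 : f j = 0 := by
      by_contra hne
      exact absurd ((hsupp j).1 hne) (by omega)
    rw [h0, enumF_eq_zero (by omega)]

lemma nice_ne_zero_iff {g : ℕ} {f : ℕ → ℕ} (h : NiceRow g f) {j : ℕ} :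
    f j ≠ 0 ↔ j < (presS g f).card := by
  rw [nice_eq_enum h j]
  exact enumF_ne_zero_iff presS_pos

lemma card_missS_add_card_presS {g : ℕ} (f : ℕ → ℕ) :
    (missS g f).card + (presS g f).card = g := by
  have := Finset.card_filter_add_card_filter_not
    (s := Finset.Icc 1 g) (p := fun k => ∀ l ∈ Finset.range g, f l ≠ k)
  rw [Nat.card_Icc] at this
  have hP : presS g f = (Finset.Icc 1 g).filter
      (fun k => ¬ ∀ l ∈ Finset.range g, f l ≠ k) := by
    ext x
    simp only [presS, Finset.mem_filter]
    push_neg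
    tauto
  rw [hP]
  unfold missS
  omega

/-- `missS` and `presS` filters partition `Icc 1 m` for `m ≤ g`. -/
lemma card_missS_filter_add {g m : ℕ} (f : ℕ → ℕ) (hm : m ≤ g) :
    ((missS g f).filter (· ≤ m)).card + ((presS g f).filter (· ≤ m)).card = m := by
  have key := Finset.card_filter_add_card_filter_not
    (s := Finset.Icc 1 m) (p := fun k => ∀ l ∈ Finset.range g, f l ≠ k)
  rw [Nat.card_Icc] at key
  have h1 : (missS g f).filter (· ≤ m) =
      (Finset.Icc 1 m).filter (fun k => ∀ l ∈ Finset.range g, f l ≠ k) := by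
    ext x
    simp only [missS, Finset.mem_filter, Finset.mem_Icc]
    constructor
    · rintro ⟨⟨⟨a, b⟩, c⟩, d⟩; exact ⟨⟨a, d⟩, c⟩
    · rintro ⟨⟨a, b⟩, c⟩; exact ⟨⟨⟨a, by omega⟩, c⟩, b⟩
  have h2 : (presS g f).filter (· ≤ m) =
      (Finset.Icc 1 m).filter (fun k => ¬ ∀ l ∈ Finset.range g, f l ≠ k) := by
    ext x
    simp only [presS, Finset.mem_filter, Finset.mem_Icc]
    push_neg
    constructor
    · rintro ⟨⟨⟨a, b⟩, c⟩, d⟩; exact ⟨⟨a, d⟩, c⟩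
    · rintro ⟨⟨a, b⟩, c⟩; exact ⟨⟨⟨a, by omega⟩, c⟩, b⟩
  rw [h1, h2]
  omega

noncomputable def posOf (f : ℕ → ℕ) (x : ℕ) : ℕ :=
  if h : ∃ l, f l = x then Nat.find h else 0

lemma posOf_spec {f : ℕ → ℕ} {x : ℕ} (h : ∃ l, f l = x) : f (posOf f x) = x := by
  rw [posOf, dif_pos h]
  exact Nat.find_spec h

/-- Injection between present-value filters: if every occupied cell of `f` with value
`≤ k` has an occupied cell of `f'` below it with value `≤ k`, then `f'` has at least as
many values `≤ k` as `f`. -/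
lemma card_presS_filter_le {g k : ℕ} {f f' : ℕ → ℕ} (hf' : NiceRow g f')
    (hdom : ∀ l, f l ≠ 0 → f l ≤ k → f' l ≠ 0 ∧ f' l ≤ k) :
    ((presS g f).filter (· ≤ k)).card ≤ ((presS g f').filter (· ≤ k)).card := by
  apply Finset.card_le_card_of_injOn (fun x => f' (posOf f x))
  · intro x hx
    simp only [Finset.mem_coe, Finset.mem_filter] at hx ⊢
    obtain ⟨hxp, hxk⟩ := hx
    have hex : ∃ l, f l = x := by
      simp only [presS, Finset.mem_filter, Finset.mem_range] at hxp
      obtain ⟨-, l, -, hl⟩ := hxp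
      exact ⟨l, hl⟩
    have hfx : f (posOf f x) = x := posOf_spec hex
    have hxpos : 0 < x := presS_pos x hxp
    have hd := hdom (posOf f x) (by omega) (by omega)
    constructor
    · rw [mem_presS_iff hf']
      exact ⟨posOf f x, rfl, hd.1⟩
    · exact hd.2
  · intro x hx y hy hxy
    simp only [Finset.coe_filter, Set.mem_setOf_eq] at hx hy
    have hexx : ∃ l, f l = x := by
      have := hx.1; simp only [presS, Finset.mem_filter, Finset.mem_range] at this
      obtain ⟨-, l, -, hl⟩ := this; exact ⟨l, hl⟩
    have hexy : ∃ l, f l = y := by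
      have := hy.1; simp only [presS, Finset.mem_filter, Finset.mem_range] at this
      obtain ⟨-, l, -, hl⟩ := this; exact ⟨l, hl⟩
    have hfx : f (posOf f x) = x := posOf_spec hexx
    have hfy : f (posOf f y) = y := posOf_spec hexy
    have hxpos : 0 < x := presS_pos x hx.1
    have hypos : 0 < y := presS_pos y hy.1
    by_contra hne
    have hpos_ne : posOf f x ≠ posOf f y := fun h => hne (by rw [← hfx, ← hfy, h])
    have hfx' := hdom (posOf f x) (by omega) (by omega)
    have hfy' := hdom (posOf f y) (by omega) (by omega)
    simp only at hxy
    rcases Nat.lt_or_ge (posOf f x) (posOf f y) with hlt | hge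
    · have := (nice_mono hf' _ _ hlt hfy'.1).2; omega
    · have := (nice_mono hf' _ _ (show posOf f y < posOf f x by omega) hfx'.1).2; omega

/-- Strict counting step (for columns of `φ(R)`). -/
lemma missS_strict {g k : ℕ} {f f' : ℕ → ℕ} (hf : NiceRow g f) (hf' : NiceRow g f')
    (hdom : ∀ l, f l ≠ 0 → f' l ≠ 0 ∧ f' l ≤ f l)
    (hk1 : 1 ≤ k) (hkg : k ≤ g)
    (hin : ∃ l, f l = k) :
    ((missS g f').filter (· ≤ k)).card ≤ ((missS g f).filter (· < k)).card := by
  have key1 := card_missS_filter_add (g := g) f (m := k - 1) (by omega)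
  have key2 := card_missS_filter_add (g := g) f' (m := k) hkg
  have hlt_eq : (missS g f).filter (· < k) = (missS g f).filter (· ≤ k - 1) :=
    Finset.filter_congr (fun x _ => by constructor <;> (intro; omega))
  have hins : (presS g f).filter (· ≤ k) = insert k ((presS g f).filter (· ≤ k - 1)) := by
    ext x
    simp only [Finset.mem_filter, Finset.mem_insert]
    constructor
    · rintro ⟨hxp, hxk⟩
      rcases Nat.eq_or_lt_of_le hxk with heq | hlt
      · exact Or.inl heq
      · exact Or.inr ⟨hxp, by omega⟩
    · rintro (rfl | ⟨hxp, hxk⟩)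
      · obtain ⟨l, hl⟩ := hin
        exact ⟨(mem_presS_iff hf).2 ⟨l, hl, by omega⟩, le_refl _⟩
      · exact ⟨hxp, by omega⟩
  have hnotmem : k ∉ (presS g f).filter (· ≤ k - 1) := by
    simp only [Finset.mem_filter]
    rintro ⟨-, h⟩; omega
  have hcard_ins : ((presS g f).filter (· ≤ k)).card
      = ((presS g f).filter (· ≤ k - 1)).card + 1 := by
    rw [hins, Finset.card_insert_of_notMem hnotmem]
  have hle := card_presS_filter_le (g := g) (k := k) hf'
    (fun l hl hlk => ⟨(hdom l hl).1, le_trans (hdom l hl).2 hlk⟩)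
  rw [hlt_eq]
  omega

/-- Weak counting step (for columns of `φ(Q)`). -/
lemma missS_weak {g k : ℕ} {f f' : ℕ → ℕ} (hf' : NiceRow g f')
    (hdom : ∀ l, f l ≠ 0 → f' l ≠ 0 ∧ f' l < f l) (hkg : k ≤ g) :
    ((missS g f').filter (· ≤ k)).card ≤ ((missS g f).filter (· ≤ k)).card := by
  have key1 := card_missS_filter_add (g := g) f (m := k) hkg
  have key2 := card_missS_filter_add (g := g) f' (m := k) hkg
  have hle := card_presS_filter_le (g := g) (k := k) hf'
    (fun l hl hlk => ⟨(hdom l hl).1, by have := (hdom l hl).2; omega⟩)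
  omega

lemma trs_nice {g r : ℕ} {R : ℕ → ℕ → ℕ} (hR : IsTrSSYT g r R) (i : ℕ) : NiceRow g (R i) :=
  ⟨hR.1 i, hR.2.2.2.1 i, hR.2.2.2.2.2.1 i⟩

lemma syt_nice {g : ℕ} {Q : ℕ → ℕ → ℕ} (hQ : IsSYT g Q) (i : ℕ) : NiceRow g (Q i) :=
  ⟨hQ.1.1 i, hQ.2.1 i, hQ.2.2.1 i⟩

lemma phiMap_eq (g r : ℕ) (X : ℕ → ℕ → ℕ) :
    phiMap g r X = fun i j => if i < r + 1 then enumF (missS g (X i)) j else 0 := rfl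

/-- The level set of a value `b` in a tableau with injective rows, counted by rows. -/
lemma ncard_level {X : ℕ → ℕ → ℕ} {r b : ℕ} (hb : b ≠ 0)
    (hzero : ∀ i j, r + 1 ≤ i → X i j = 0)
    (hrow : ∀ i j j', j < j' → X i j' ≠ 0 → X i j ≠ 0 → X i j < X i j') :
    {p : ℕ × ℕ | X p.1 p.2 = b}.ncard
      = ((Finset.range (r + 1)).filter (fun i => ∃ j, X i j = b)).card := by
  have hinj : Set.InjOn Prod.fst {p : ℕ × ℕ | X p.1 p.2 = b} := by
    rintro ⟨i, j⟩ hp ⟨i', j'⟩ hq h1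
    simp only [Set.mem_setOf_eq] at hp hq
    simp only at h1
    subst h1
    by_contra hne
    have hne' : j ≠ j' := fun h => hne (by rw [h])
    rcases Nat.lt_or_ge j j' with hlt | hge
    · have := hrow i j j' hlt (by rw [hq]; exact hb) (by rw [hp]; exact hb); omega
    · have := hrow i j' j (by omega) (by rw [hp]; exact hb) (by rw [hq]; exact hb); omega
  rw [← Set.ncard_image_of_injOn hinj]
  have himg : Prod.fst '' {p : ℕ × ℕ | X p.1 p.2 = b}
      = ↑((Finset.range (r + 1)).filter (fun i => ∃ j, X i j = b)) := by
    ext i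
    simp only [Set.mem_image, Set.mem_setOf_eq, Finset.coe_filter, Finset.mem_range,
      Set.mem_setOf_eq]
    constructor
    · rintro ⟨⟨i', j⟩, hp, rfl⟩
      refine ⟨?_, j, hp⟩
      by_contra hge
      rw [hzero i' j (by omega)] at hp
      exact hb hp.symm
    · rintro ⟨hi, j, hj⟩
      exact ⟨(i, j), hj, rfl⟩
  rw [himg, Set.ncard_coe_finset]

lemma card_filter_missing {r : ℕ} {X : ℕ → ℕ → ℕ} {b c : ℕ}
    (hcard : ((Finset.range (r + 1)).filter (fun i => ∃ j, X i j = b)).card = c) :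
    ((Finset.range (r + 1)).filter (fun i => ∀ l, X i l ≠ b)).card = r + 1 - c := by
  have key := Finset.card_filter_add_card_filter_not
    (s := Finset.range (r + 1)) (p := fun i => ∃ j, X i j = b)
  have heq : (Finset.range (r + 1)).filter (fun i => ¬∃ j, X i j = b)
      = (Finset.range (r + 1)).filter (fun i => ∀ l, X i l ≠ b) :=
    Finset.filter_congr (fun i _ => by push_neg; exact Iff.rfl)
  rw [heq] at key
  rw [Finset.card_range] at key
  omega

lemma exists_phi_eq_iff {g r i b : ℕ} {X : ℕ → ℕ → ℕ} (hi : i < r + 1)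
    (hnice : NiceRow g (X i)) (hb1 : 1 ≤ b) (hbg : b ≤ g) :
    (∃ j, phiMap g r X i j = b) ↔ ∀ l, X i l ≠ b := by
  have hφ : ∀ j, phiMap g r X i j = enumF (missS g (X i)) j := fun j => by
    simp only [phiMap_eq]; exact if_pos hi
  constructor
  · rintro ⟨j, hj⟩
    rw [hφ j] at hj
    have hne : enumF (missS g (X i)) j ≠ 0 := by omega
    have hjc : j < (missS g (X i)).card := (enumF_ne_zero_iff missS_pos).1 hne
    have := enumF_mem hjc
    rw [hj] at this
    exact ((mem_missS_iff hnice).1 this).2.2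
  · intro hall
    have hbmem : b ∈ missS g (X i) := (mem_missS_iff hnice).2 ⟨hb1, hbg, hall⟩
    obtain ⟨j, hj, he⟩ := enumF_surj hbmem
    exact ⟨j, by rw [hφ j]; exact he⟩

/-- Column comparison for `φ(R)` with `R` a rotated-conjugated SSYT: strict increase
down columns. -/
lemma phiR_col {g r : ℕ} {R : ℕ → ℕ → ℕ} (hR : IsTrSSYT g r R) {i j : ℕ}
    (hi : i + 1 < r + 1) (hj : j < (missS g (R (i + 1))).card) :
    j < (missS g (R i)).card ∧ enumF (missS g (R i)) j < enumF (missS g (R (i + 1))) j := by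
  set b := enumF (missS g (R (i + 1))) j with hbdef
  have hbmem : b ∈ missS g (R (i + 1)) := enumF_mem hj
  have hb := (mem_missS_iff (trs_nice hR (i + 1))).1 hbmem
  -- `b` occurs in row `i`
  have hin : ∃ l, R i l = b := by
    by_contra hno
    push_neg at hno
    have hJ : ((Finset.range (r + 1)).filter (fun i' => ∃ j', R i' j' = b)).card = r := by
      rw [← ncard_level (r := r) (by omega) hR.2.2.1
        (fun i' j1 j2 h1 h2 h3 => (nice_mono (trs_nice hR i') j2 j1 h1 h2).2)]
      exact hR.2.2.2.2.2.2 b hb.1 hb.2.1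
    have hK := card_filter_missing (r := r) hJ
    have hsub : ({i, i + 1} : Finset ℕ) ⊆
        (Finset.range (r + 1)).filter (fun i' => ∀ l, R i' l ≠ b) := by
      intro x hx
      simp only [Finset.mem_insert, Finset.mem_singleton] at hx
      simp only [Finset.mem_filter, Finset.mem_range]
      rcases hx with rfl | rfl
      · exact ⟨by omega, hno⟩
      · exact ⟨hi, hb.2.2⟩
    have hcard2 : ({i, i + 1} : Finset ℕ).card = 2 := by
      rw [Finset.card_insert_of_notMem (by simp), Finset.card_singleton]
    have := Finset.card_le_card hsub
    omega
  have hcount := missS_strict (trs_nice hR i) (trs_nice hR (i + 1))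
    (fun l hl => ⟨hR.2.1 i l (by omega) hl,
      hR.2.2.2.2.1 i l hl (hR.2.1 i l (by omega) hl)⟩)
    hb.1 hb.2.1 hin
  have hrank : ((missS g (R (i + 1))).filter (· ≤ b)).card = j + 1 := card_filter_le_enumF hj
  exact enumF_lt_of_card (by omega)

/-- Column comparison for `φ(Q)` with `Q` an SYT: weak decrease down columns. -/
lemma phiQ_col {g : ℕ} {Q : ℕ → ℕ → ℕ} (hQ : IsSYT g Q) {i j : ℕ}
    (hj : j < (missS g (Q i)).card) :
    j < (missS g (Q (i + 1))).card ∧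
      enumF (missS g (Q (i + 1))) j ≤ enumF (missS g (Q i)) j := by
  set b := enumF (missS g (Q i)) j with hbdef
  have hbmem : b ∈ missS g (Q i) := enumF_mem hj
  have hbg : b ≤ g := ((mem_missS_iff (syt_nice hQ i)).1 hbmem).2.1
  have hcount := missS_weak (f := Q (i + 1)) (f' := Q i) (syt_nice hQ i)
    (fun l hl => ⟨hQ.1.2.1 i l hl, hQ.1.2.2.2 i l hl⟩) hbg
  have hrank : ((missS g (Q i)).filter (· ≤ b)).card = j + 1 := card_filter_le_enumF hj
  exact enumF_le_of_card (by omega)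

lemma missS_phi {g r i : ℕ} {X : ℕ → ℕ → ℕ} (hi : i < r + 1) (hnice : NiceRow g (X i)) :
    missS g (phiMap g r X i) = presS g (X i) := by
  have hφ : ∀ j, phiMap g r X i j = enumF (missS g (X i)) j := fun j => by
    simp only [phiMap_eq]; exact if_pos hi
  ext k
  simp only [missS, presS, Finset.mem_filter, Finset.mem_Icc, Finset.mem_range]
  constructor
  · rintro ⟨⟨hk1, hkg⟩, hall⟩
    refine ⟨⟨hk1, hkg⟩, ?_⟩
    -- k is not in missS g (X i)
    have hknot : k ∉ missS g (X i) := by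
      intro hk
      obtain ⟨j, hjc, he⟩ := enumF_surj hk
      have hjg : j < g := by have := missS_card_le (g := g) (f := X i); omega
      exact hall j hjg (by rw [hφ j]; exact he)
    simp only [missS, Finset.mem_filter, Finset.mem_Icc, Finset.mem_range] at hknot
    push_neg at hknot
    obtain ⟨l, hl, he⟩ := hknot ⟨hk1, hkg⟩
    exact ⟨l, hl, by omega⟩
  · rintro ⟨⟨hk1, hkg⟩, l, hl, he⟩
    refine ⟨⟨hk1, hkg⟩, fun l' hl' => ?_⟩
    rw [hφ l']
    intro hcontra
    have hk0 : k ≠ 0 := by omega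
    have hlc : l' < (missS g (X i)).card :=
      (enumF_ne_zero_iff missS_pos).1 (by rw [hcontra]; exact hk0)
    have := enumF_mem hlc
    rw [hcontra] at this
    have := (mem_missS_iff hnice).1 this
    exact this.2.2 l he

lemma phi_phi {g r : ℕ} {X : ℕ → ℕ → ℕ} (hnice : ∀ i, i < r + 1 → NiceRow g (X i))
    (hzero : ∀ i j, r + 1 ≤ i → X i j = 0) :
    phiMap g r (phiMap g r X) = X := by
  funext i j
  rw [phiMap_eq]
  rcases Nat.lt_or_ge i (r + 1) with hi | hi
  · show (if i < r + 1 then enumF (missS g (phiMap g r X i)) j else 0) = X i j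
    rw [if_pos hi, missS_phi hi (hnice i hi)]
    exact (nice_eq_enum (hnice i hi) j).symm
  · show (if i < r + 1 then enumF (missS g (phiMap g r X i)) j else 0) = X i j
    rw [if_neg (by omega), hzero i j hi]

lemma phi_mapsTo1 {g r : ℕ} {R : ℕ → ℕ → ℕ} (hR : IsTrSSYT g r R) :
    IsSYT g (phiMap g r R) ∧ ∀ i j, r + 1 ≤ i → phiMap g r R i j = 0 := by
  have hφ : ∀ i j, phiMap g r R i j
      = if i < r + 1 then enumF (missS g (R i)) j else 0 := fun i j => by rw [phiMap_eq]
  have hzero : ∀ i j, r + 1 ≤ i → phiMap g r R i j = 0 := fun i j hi => by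
    rw [hφ, if_neg (by omega)]
  have hnz : ∀ i j, i < r + 1 → (phiMap g r R i j ≠ 0 ↔ j < (missS g (R i)).card) := by
    intro i j hi
    rw [hφ, if_pos hi]
    exact enumF_ne_zero_iff missS_pos
  have hrowφ : ∀ i j j', j < j' → phiMap g r R i j' ≠ 0 → phiMap g r R i j ≠ 0 →
      phiMap g r R i j < phiMap g r R i j' := by
    intro i j1 j2 h1 h2 h3
    have hi : i < r + 1 := by by_contra hge; exact h2 (hzero i j2 (by omega))
    have hj2 := (hnz i j2 hi).1 h2
    rw [hφ i j1, hφ i j2, if_pos hi, if_pos hi]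
    exact enumF_strictMono h1 hj2
  have hrowstrict : ∀ i j, phiMap g r R i (j + 1) ≠ 0 →
      phiMap g r R i j < phiMap g r R i (j + 1) := by
    intro i j hne
    have hi : i < r + 1 := by by_contra hge; exact hne (hzero i (j + 1) (by omega))
    have hj1 := (hnz i (j + 1) hi).1 hne
    exact hrowφ i j (j + 1) (by omega) hne ((hnz i j hi).2 (by omega))
  have hleftjust : ∀ i j, phiMap g r R i (j + 1) ≠ 0 → phiMap g r R i j ≠ 0 := by
    intro i j hne
    have hi : i < r + 1 := by by_contra hge; exact hne (hzero i (j + 1) (by omega))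
    have hj1 := (hnz i (j + 1) hi).1 hne
    exact (hnz i j hi).2 (by omega)
  have hcolstrict : ∀ i j, phiMap g r R (i + 1) j ≠ 0 →
      phiMap g r R i j ≠ 0 ∧ phiMap g r R i j < phiMap g r R (i + 1) j := by
    intro i j hne
    have hi : i + 1 < r + 1 := by by_contra hge; exact hne (hzero (i + 1) j (by omega))
    have hj1 := (hnz (i + 1) j hi).1 hne
    obtain ⟨h1, h2⟩ := phiR_col hR hi hj1
    refine ⟨(hnz i j (by omega)).2 h1, ?_⟩
    rw [hφ i j, hφ (i + 1) j, if_pos (by omega : i < r + 1), if_pos hi]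
    exact h2
  refine ⟨⟨⟨hleftjust, fun i j h => (hcolstrict i j h).1,
    fun i j h => le_of_lt (hrowstrict i j h), fun i j h => (hcolstrict i j h).2⟩,
    hrowstrict, ?_, ?_⟩, hzero⟩
  · intro i j hne
    have hi : i < r + 1 := by by_contra hge; exact hne (hzero i j (by omega))
    have hj := (hnz i j hi).1 hne
    have hmem := (mem_missS_iff (trs_nice hR i)).1 (enumF_mem hj)
    rw [hφ, if_pos hi]
    exact hmem.2.1
  · intro k hk1 hkg
    have hJ : ((Finset.range (r + 1)).filter (fun i' => ∃ j', R i' j' = k)).card = r := by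
      rw [← ncard_level (r := r) (by omega : k ≠ 0) hR.2.2.1
        (fun i' j1 j2 h1 h2 h3 => (nice_mono (trs_nice hR i') j2 j1 h1 h2).2)]
      exact hR.2.2.2.2.2.2 k hk1 hkg
    have hK := card_filter_missing (r := r) hJ
    rw [ncard_level (X := phiMap g r R) (r := r) (b := k) (by omega) hzero hrowφ]
    have hIK : (Finset.range (r + 1)).filter (fun i => ∃ j, phiMap g r R i j = k)
        = (Finset.range (r + 1)).filter (fun i => ∀ l, R i l ≠ k) := by
      apply Finset.filter_congr
      intro i hi
      rw [Finset.mem_range] at hi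
      exact exists_phi_eq_iff hi (trs_nice hR i) hk1 hkg
    rw [hIK, hK]
    omega

lemma phi_mapsTo2 {g r : ℕ} {Q : ℕ → ℕ → ℕ} (hr : 1 ≤ r) (hQ : IsSYT g Q)
    (hz : ∀ i j, r + 1 ≤ i → Q i j = 0) : IsTrSSYT g r (phiMap g r Q) := by
  have hφ : ∀ i j, phiMap g r Q i j
      = if i < r + 1 then enumF (missS g (Q i)) j else 0 := fun i j => by rw [phiMap_eq]
  have hzero : ∀ i j, r + 1 ≤ i → phiMap g r Q i j = 0 := fun i j hi => by
    rw [hφ, if_neg (by omega)]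
  have hnz : ∀ i j, i < r + 1 → (phiMap g r Q i j ≠ 0 ↔ j < (missS g (Q i)).card) := by
    intro i j hi
    rw [hφ, if_pos hi]
    exact enumF_ne_zero_iff missS_pos
  refine ⟨?_, ?_, hzero, ?_, ?_, ?_, ?_⟩
  · -- left-justified
    intro i j hne
    have hi : i < r + 1 := by by_contra hge; exact hne (hzero i (j + 1) (by omega))
    have hj1 := (hnz i (j + 1) hi).1 hne
    exact (hnz i j hi).2 (by omega)
  · -- bottom-justified
    intro i j hi hne
    have hi1 : i < r + 1 := by omega
    have hj := (hnz i j hi1).1 hne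
    exact (hnz (i + 1) j (by omega)).2 (phiQ_col hQ hj).1
  · -- rows strictly increasing
    intro i j hne
    have hi : i < r + 1 := by by_contra hge; exact hne (hzero i (j + 1) (by omega))
    have hj1 := (hnz i (j + 1) hi).1 hne
    rw [hφ i j, hφ i (j + 1), if_pos hi, if_pos hi]
    exact enumF_strictMono (by omega) hj1
  · -- columns weakly decreasing
    intro i j h1 h2
    have hi1 : i + 1 < r + 1 := by by_contra hge; exact h2 (hzero (i + 1) j (by omega))
    have hj := (hnz i j (by omega)).1 h1
    rw [hφ i j, hφ (i + 1) j, if_pos (by omega : i < r + 1), if_pos hi1]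
    exact (phiQ_col hQ hj).2
  · -- entries ≤ g
    intro i j hne
    have hi : i < r + 1 := by by_contra hge; exact hne (hzero i j (by omega))
    have hj := (hnz i j hi).1 hne
    have hmem := (mem_missS_iff (syt_nice hQ i)).1 (enumF_mem hj)
    rw [hφ, if_pos hi]
    exact hmem.2.1
  · -- content
    intro k hk1 hkg
    have hJ : ((Finset.range (r + 1)).filter (fun i' => ∃ j', Q i' j' = k)).card = 1 := by
      rw [← ncard_level (r := r) (by omega : k ≠ 0) hz
        (fun i' j1 j2 h1 h2 h3 => (nice_mono (syt_nice hQ i') j2 j1 h1 h2).2)]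
      exact hQ.2.2.2 k hk1 hkg
    have hK := card_filter_missing (r := r) hJ
    have hrowφ : ∀ i j j', j < j' → phiMap g r Q i j' ≠ 0 → phiMap g r Q i j ≠ 0 →
        phiMap g r Q i j < phiMap g r Q i j' := by
      intro i j1 j2 h1 h2 h3
      have hi : i < r + 1 := by by_contra hge; exact h2 (hzero i j2 (by omega))
      have hj2 := (hnz i j2 hi).1 h2
      rw [hφ i j1, hφ i j2, if_pos hi, if_pos hi]
      exact enumF_strictMono h1 hj2
    rw [ncard_level (X := phiMap g r Q) (r := r) (b := k) (by omega) hzero hrowφ]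
    have hIK : (Finset.range (r + 1)).filter (fun i => ∃ j, phiMap g r Q i j = k)
        = (Finset.range (r + 1)).filter (fun i => ∀ l, Q i l ≠ k) := by
      apply Finset.filter_congr
      intro i hi
      rw [Finset.mem_range] at hi
      exact exists_phi_eq_iff hi (syt_nice hQ i) hk1 hkg
    rw [hIK, hK]
    omega

/-- `φ` is a bijection from `TrSSYT^{180°}(g,r)` to `SYT(g,r)`
(standard Young tableaux of size `g` and height at most `r + 1`); moreover the shapes
of `R` and `φ(R)` are complementary inside the `(r+1) × g` rectangle (the grid cell in
row `i` and column `j` from the left is occupied by `φ(R)` if and only if the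
corresponding cell, which is at distance `g - 1 - j` from the right edge, is not
occupied by `R`). -/
theorem phi_bijOn_and_complementary (g r : ℕ) (hr : 1 ≤ r) :
    Set.BijOn (phiMap g r) {R | IsTrSSYT g r R}
      {Q | IsSYT g Q ∧ ∀ i j, r + 1 ≤ i → Q i j = 0} ∧
    ∀ R, IsTrSSYT g r R → ∀ i j, i < r + 1 → j < g →
      (R i (g - 1 - j) ≠ 0 ↔ phiMap g r R i j = 0) := by
  constructor
  · apply Set.InvOn.bijOn (f' := phiMap g r)
    · constructor
      · intro R hR
        exact phi_phi (fun i _ => trs_nice hR i) hR.2.2.1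
      · intro Q hQ
        exact phi_phi (fun i _ => syt_nice hQ.1 i) hQ.2
    · intro R hR
      exact phi_mapsTo1 hR
    · intro Q hQ
      exact phi_mapsTo2 hr hQ.1 hQ.2
  · intro R hR i j hi hj
    have hnice := trs_nice hR i
    have hcards := card_missS_add_card_presS (g := g) (R i)
    have h1 : R i (g - 1 - j) ≠ 0 ↔ g - 1 - j < (presS g (R i)).card :=
      nice_ne_zero_iff hnice
    have h2 : phiMap g r R i j = 0 ↔ (missS g (R i)).card ≤ j := by
      have he : phiMap g r R i j = enumF (missS g (R i)) j := by
        simp only [phiMap_eq]; exact if_pos hi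
      rw [he]
      constructor
      · intro h0
        by_contra hlt
        have := enumF_pos (missS_pos (g := g) (f := R i))
          (show j < (missS g (R i)).card by omega)
        omega
      · intro hge
        exact enumF_eq_zero hge
    rw [h1, h2]
    omega
end

section
/- Let g ≥ 0, r ≥ 1, d ≥ r be integers with r dividing d, (d−r)(r+1) ≥ rg, and n = ((r+1)/r)·d − g + 1 an integer. Then the map sending an L-tableau 𝐋 ∈ 𝓛^r_{g,n,d}, with blue tableau B and red tableau R, to the pair (ψ(B), φ(R)) is a bijection from 𝓛^r_{g,n,d} to 𝒯^r_{g,n,d}. -/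
open scoped Classical

namespace LTaux
open Finset

/-! ### Layer 1: sorted lists, selD, rank -/

lemma getD_le_iff : ∀ (L : List ℕ), L.Pairwise (· < ·) → ∀ j, j < L.length → ∀ a : ℕ,
    (L.getD j 0 ≤ a ↔ j < L.countP (· ≤ a)) := by
  intro L
  induction L with
  | nil => intro _ j hj; simp at hj
  | cons x t ih =>
    intro hL j hj a
    rw [List.pairwise_cons] at hL
    rw [List.countP_cons]
    by_cases hxa : x ≤ a
    · cases j with
      | zero =>
        simp only [List.getD_cons_zero, hxa, true_iff]
        simp [hxa]
      | succ j =>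
        have hj' : j < t.length := by simpa using hj
        have h2 := ih hL.2 j hj' a
        simp only [List.getD_cons_succ, hxa] at *
        simp only [decide_eq_true_eq, if_pos hxa] at *
        omega
    · have ht0 : t.countP (· ≤ a) = 0 := by
        rw [List.countP_eq_zero]
        intro b hb
        simp only [decide_eq_true_eq]
        have : x < b := hL.1 b hb
        omega
      cases j with
      | zero => simp [hxa, ht0]
      | succ j =>
        have hj' : j < t.length := by simpa using hj
        simp only [List.getD_cons_succ, ht0, hxa]
        constructor
        · intro h
          exfalso
          have hmem : t.getD j 0 ∈ t := by
            rw [List.getD_eq_getElem _ _ hj']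
            exact List.getElem_mem _
          have := hL.1 _ hmem
          omega
        · intro h; simp at h

noncomputable def selD (S : Finset ℕ) (j : ℕ) : ℕ := (S.sort (· ≤ ·)).getD j 0

noncomputable def rank (S : Finset ℕ) (a : ℕ) : ℕ := (S.filter (fun x => x ≤ a)).card

lemma rank_eq_countP (S : Finset ℕ) (a : ℕ) :
    rank S a = (S.sort (· ≤ ·)).countP (· ≤ a) := by
  rw [(show (S.sort (· ≤ ·)).Perm S.toList from Finset.sort_perm_toList ..).countP_eq]
  have h1 : (Multiset.countP (fun x => x ≤ a) ↑S.toList : ℕ) = List.countP (fun x => decide (x ≤ a)) S.toList :=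
    Multiset.coe_countP _ _
  rw [rank, ← h1, Finset.coe_toList, Multiset.countP_eq_card_filter]
  rfl

lemma selD_le_iff {S : Finset ℕ} {j : ℕ} (hj : j < S.card) (a : ℕ) :
    selD S j ≤ a ↔ j < rank S a := by
  rw [rank_eq_countP, selD]
  exact getD_le_iff _ (Finset.sortedLT_sort S).pairwise j (by rwa [Finset.length_sort]) a

lemma selD_mem {S : Finset ℕ} {j : ℕ} (hj : j < S.card) : selD S j ∈ S := by
  have hl : j < (S.sort (· ≤ ·)).length := by rwa [Finset.length_sort]
  rw [selD, List.getD_eq_getElem _ _ hl]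
  exact (Finset.mem_sort _).1 (List.getElem_mem _)

lemma selD_eq_zero {S : Finset ℕ} {j : ℕ} (hj : S.card ≤ j) : selD S j = 0 := by
  rw [selD]
  apply List.getD_eq_default
  rwa [Finset.length_sort]

lemma selD_strictMono {S : Finset ℕ} {j j' : ℕ} (h : j < j') (hj' : j' < S.card) :
    selD S j < selD S j' := by
  have hl' : j' < (S.sort (· ≤ ·)).length := by rwa [Finset.length_sort]
  have hl : j < (S.sort (· ≤ ·)).length := lt_trans (by omega) hl'
  rw [selD, selD, List.getD_eq_getElem _ _ hl, List.getD_eq_getElem _ _ hl']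
  have := List.Pairwise.rel_get_of_lt (Finset.sortedLT_sort S).pairwise
    (a := ⟨j, hl⟩) (b := ⟨j', hl'⟩) (by exact h)
  simpa [List.get_eq_getElem] using this

lemma selD_pos {S : Finset ℕ} {j : ℕ} (hS : ∀ x ∈ S, 1 ≤ x) (hj : j < S.card) :
    1 ≤ selD S j := hS _ (selD_mem hj)

lemma selD_ne_zero_iff {S : Finset ℕ} (hS : ∀ x ∈ S, 1 ≤ x) {j : ℕ} :
    selD S j ≠ 0 ↔ j < S.card := by
  constructor
  · intro h
    by_contra hc
    exact h (selD_eq_zero (by omega))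
  · intro h
    have := selD_pos hS h
    omega

lemma selD_inj {S : Finset ℕ} {j j' : ℕ} (hj : j < S.card) (hj' : j' < S.card)
    (h : selD S j = selD S j') : j = j' := by
  rcases lt_trichotomy j j' with hlt | he | hgt
  · have := selD_strictMono hlt hj'; omega
  · exact he
  · have := selD_strictMono hgt hj; omega

lemma selD_surj {S : Finset ℕ} {k : ℕ} (hk : k ∈ S) : ∃ j < S.card, selD S j = k := by
  have : k ∈ S.sort (· ≤ ·) := (Finset.mem_sort _).2 hk
  rw [List.mem_iff_getElem] at this
  obtain ⟨j, hj, hjk⟩ := this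
  refine ⟨j, by rwa [Finset.length_sort] at hj, ?_⟩
  rw [selD, List.getD_eq_getElem _ _ hj, hjk]

lemma rank_le_card (S : Finset ℕ) (a : ℕ) : rank S a ≤ S.card := Finset.card_filter_le _ _

lemma rank_eq_card {S : Finset ℕ} {g : ℕ} (hS : ∀ x ∈ S, x ≤ g) : rank S g = S.card := by
  rw [rank, Finset.filter_true_of_mem hS]

lemma selD_le_selD_of_rank {S S' : Finset ℕ} (h : ∀ a, rank S a ≤ rank S' a)
    {j : ℕ} (hj : j < S.card) (hj' : j < S'.card) : selD S' j ≤ selD S j := by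
  have h1 : selD S j ≤ selD S j := le_refl _
  rw [selD_le_iff hj] at h1
  exact (selD_le_iff hj' _).2 (lt_of_lt_of_le h1 (h _))

/-- rows-as-finsets: image of a strictly monotone prefix -/
def Vrow (f : ℕ → ℕ) (ρ : ℕ) : Finset ℕ := (Finset.range ρ).image f

lemma mem_Vrow {f : ℕ → ℕ} {ρ k : ℕ} : k ∈ Vrow f ρ ↔ ∃ l < ρ, f l = k := by
  simp [Vrow]

lemma Vrow_injOn {f : ℕ → ℕ} {ρ : ℕ} (hmono : ∀ a b, a < b → b < ρ → f a < f b) :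
    Set.InjOn f (Finset.range ρ) := by
  intro a ha b hb hab
  simp only [Finset.coe_range, Set.mem_Iio] at ha hb
  rcases lt_trichotomy a b with h | h | h
  · have := hmono a b h hb; omega
  · exact h
  · have := hmono b a h ha; omega

lemma card_Vrow {f : ℕ → ℕ} {ρ : ℕ} (hmono : ∀ a b, a < b → b < ρ → f a < f b) :
    (Vrow f ρ).card = ρ := by
  rw [Vrow, Finset.card_image_of_injOn (Vrow_injOn hmono), Finset.card_range]

lemma sort_Vrow {f : ℕ → ℕ} {ρ : ℕ} (hmono : ∀ a b, a < b → b < ρ → f a < f b) :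
    (Vrow f ρ).sort (· ≤ ·) = (List.range ρ).map f := by
  refine (fun h1 h2 h3 => List.Perm.eq_of_pairwise' (r := (· ≤ · : ℕ → ℕ → Prop)) h2 h3 h1) ?_ ?_ ?_
  · apply List.perm_of_nodup_nodup_toFinset_eq
    · exact Finset.sort_nodup _ _
    · apply List.Nodup.map_on _ List.nodup_range
      intro a ha b hb hab
      exact Vrow_injOn hmono (by simpa using List.mem_range.1 ha)
        (by simpa using List.mem_range.1 hb) hab
    · rw [Finset.sort_toFinset]
      ext x
      simp [Vrow]
  · exact Finset.pairwise_sort _ _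
  · rw [List.pairwise_map]
    apply List.Pairwise.imp_of_mem (R := (· < ·)) _ List.pairwise_lt_range
    intro a b _ hb hab
    exact le_of_lt (hmono a b hab (List.mem_range.1 hb))

lemma selD_Vrow {f : ℕ → ℕ} {ρ : ℕ} (hmono : ∀ a b, a < b → b < ρ → f a < f b)
    {j : ℕ} (hj : j < ρ) : selD (Vrow f ρ) j = f j := by
  rw [selD, sort_Vrow hmono]
  have hl : j < ((List.range ρ).map f).length := by simpa using hj
  rw [List.getD_eq_getElem _ _ hl]
  simp

lemma rank_Vrow {f : ℕ → ℕ} {ρ : ℕ} (hmono : ∀ a b, a < b → b < ρ → f a < f b) (a : ℕ) :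
    rank (Vrow f ρ) a = ((Finset.range ρ).filter (fun l => f l ≤ a)).card := by
  classical
  have himg : (Vrow f ρ).filter (fun x => x ≤ a)
      = ((Finset.range ρ).filter (fun l => f l ≤ a)).image f := by
    ext x
    simp only [Vrow, Finset.mem_filter, Finset.mem_image, Finset.mem_range]
    constructor
    · rintro ⟨⟨l, hl, rfl⟩, hx⟩
      exact ⟨l, ⟨hl, hx⟩, rfl⟩
    · rintro ⟨l, ⟨hl, hx⟩, rfl⟩
      exact ⟨⟨l, hl, rfl⟩, hx⟩
  rw [rank, himg, Finset.card_image_of_injOn]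
  exact Set.InjOn.mono (Finset.coe_subset.mpr (Finset.filter_subset _ _)) (Vrow_injOn hmono)

/-- complement inside Icc 1 g -/
lemma rank_compl_add {S : Finset ℕ} {g : ℕ} (hS : S ⊆ Finset.Icc 1 g) (a : ℕ) :
    rank ((Finset.Icc 1 g).filter (fun k => k ∉ S)) a + rank S a = min g a := by
  classical
  have h1 : rank S a = ((Finset.Icc 1 g).filter (fun k => k ∈ S ∧ k ≤ a)).card := by
    rw [rank]; congr 1; ext x
    simp only [Finset.mem_filter]
    constructor
    · intro ⟨hx, hxa⟩; exact ⟨hS hx, hx, hxa⟩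
    · intro ⟨_, hx, hxa⟩; exact ⟨hx, hxa⟩
  have h2 : rank ((Finset.Icc 1 g).filter (fun k => k ∉ S)) a
      = ((Finset.Icc 1 g).filter (fun k => k ∉ S ∧ k ≤ a)).card := by
    rw [rank, Finset.filter_filter]
  rw [h1, h2]
  have h3 : ((Finset.Icc 1 g).filter (fun k => k ∉ S ∧ k ≤ a)).card
      + ((Finset.Icc 1 g).filter (fun k => k ∈ S ∧ k ≤ a)).card
      = ((Finset.Icc 1 g).filter (fun k => k ≤ a)).card := by
    have h5 := Finset.card_filter_add_card_filter_not
      (s := (Finset.Icc 1 g).filter (fun k => k ≤ a)) (p := fun k => k ∉ S)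
    have e1 : ((Finset.Icc 1 g).filter (fun k => k ≤ a)).filter (fun k => k ∉ S)
        = (Finset.Icc 1 g).filter (fun k => k ∉ S ∧ k ≤ a) := by
      rw [Finset.filter_filter]
      apply Finset.filter_congr
      intro x _; tauto
    have e2 : ((Finset.Icc 1 g).filter (fun k => k ≤ a)).filter (fun k => ¬ k ∉ S)
        = (Finset.Icc 1 g).filter (fun k => k ∈ S ∧ k ≤ a) := by
      rw [Finset.filter_filter]
      apply Finset.filter_congr
      intro x _; tauto
    rw [e1, e2] at h5
    omega
  rw [h3]
  have h4 : (Finset.Icc 1 g).filter (fun k => k ≤ a) = Finset.Icc 1 (min g a) := by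
    ext x
    simp only [Finset.mem_filter, Finset.mem_Icc, le_min_iff]
    omega
  rw [h4, Nat.card_Icc]
  omega

/-! ### Layer 2: tableau basics -/

/-- entries in row `i` are at least `i+1` -/
lemma row_ge {T : ℕ → ℕ → ℕ} (hT : IsSSYT T) : ∀ i j, T i j ≠ 0 → i + 1 ≤ T i j := by
  intro i
  induction i with
  | zero => intro j hj; omega
  | succ i ih =>
    intro j hj
    have h1 := hT.2.2.2 i j hj
    have h2 := hT.2.1 i j hj
    have := ih j h2
    omega

lemma zero_of_row_ge {T : ℕ → ℕ → ℕ} {r : ℕ} (hT : IsSSYT T)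
    (hbd : ∀ i j, T i j ≠ 0 → T i j ≤ r + 1) : ∀ i j, r + 1 ≤ i → T i j = 0 := by
  intro i j hi
  by_contra h
  have := row_ge hT i j h
  have := hbd i j h
  omega

/-- propagate nonzero up a column -/
lemma col_prefix {T : ℕ → ℕ → ℕ} (hT : IsSSYT T) :
    ∀ i i' j, i ≤ i' → T i' j ≠ 0 → T i j ≠ 0 := by
  intro i i' j hii'
  induction i' with
  | zero =>
    have : i = 0 := by omega
    subst this; exact id
  | succ i' ih =>
    intro h
    rcases Nat.eq_or_lt_of_le hii' with he | hlt
    · subst he; exact h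
    · exact ih (by omega) (hT.2.1 i' j h)

lemma row_prefix_le {T : ℕ → ℕ → ℕ} (hT : IsSSYT T) :
    ∀ i j j', j ≤ j' → T i j' ≠ 0 → T i j ≠ 0 := by
  intro i j j' hjj'
  induction j' with
  | zero =>
    have : j = 0 := by omega
    subst this; exact id
  | succ j' ih =>
    intro h
    rcases Nat.eq_or_lt_of_le hjj' with he | hlt
    · subst he; exact h
    · exact ih (by omega) (hT.1 i j' h)

/-- a full column (nonzero in row `r`) is filled with `1, …, r+1` -/
lemma full_col {T : ℕ → ℕ → ℕ} {r : ℕ} (hT : IsSSYT T)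
    (hbd : ∀ i j, T i j ≠ 0 → T i j ≤ r + 1) {j : ℕ} (hcol : T r j ≠ 0) :
    ∀ i, i ≤ r → T i j = i + 1 := by
  have hne : ∀ i, i ≤ r → T i j ≠ 0 := fun i hi => col_prefix hT i r j hi hcol
  -- downward induction via r - i
  suffices h : ∀ m, ∀ i, i + m = r → T i j = i + 1 by
    intro i hi
    exact h (r - i) i (by omega)
  intro m
  induction m with
  | zero =>
    intro i hi
    have h1 := row_ge hT i j (hne i (by omega))
    have h2 := hbd i j (hne i (by omega))
    omega
  | succ m ih =>
    intro i hi
    have hnext := ih (i + 1) (by omega)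
    have h1 := row_ge hT i j (hne i (by omega))
    have h2 := hT.2.2.2 i j (hne (i + 1) (by omega))
    omega

/-- an `i`-entry lies in row at most `i - 1` -/
lemma row_le_of_entry {T : ℕ → ℕ → ℕ} (hT : IsSSYT T) {a j v : ℕ} (h : T a j = v) (hv : v ≠ 0) :
    a + 1 ≤ v := by
  have := row_ge hT a j (by omega)
  omega

noncomputable def rowLen (T : ℕ → ℕ → ℕ) (i : ℕ) : ℕ := sInf {j | T i j = 0}

lemma rowLen_iff {T : ℕ → ℕ → ℕ} {i N : ℕ}
    (hpre : ∀ j, T i (j + 1) ≠ 0 → T i j ≠ 0) (hN : T i N = 0) :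
    ∀ j, T i j ≠ 0 ↔ j < rowLen T i := by
  have hne : {j | T i j = 0}.Nonempty := ⟨N, hN⟩
  have hmem : T i (rowLen T i) = 0 := Nat.sInf_mem hne
  have hprop : ∀ k, T i (rowLen T i + k) = 0 := by
    intro k
    induction k with
    | zero => exact hmem
    | succ k ih =>
      by_contra h
      exact (hpre (rowLen T i + k) h) ih
  intro j
  constructor
  · intro h
    by_contra hc
    push_neg at hc
    have : T i j = 0 := by
      have := hprop (j - rowLen T i)
      rwa [Nat.add_sub_cancel' hc] at this
    exact h this
  · intro h
    exact fun hz => Nat.notMem_of_lt_sInf h hz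

lemma rowLen_le {T : ℕ → ℕ → ℕ} {i N : ℕ} (hN : T i N = 0) : rowLen T i ≤ N :=
  Nat.sInf_le hN

lemma len_unique {a b : ℕ} (h : ∀ j, j < a ↔ j < b) : a = b := by
  have h1 := h a
  have h2 := h b
  omega

/-- the support finset of a "shape function" characterization -/
lemma support_eq {T : ℕ → ℕ → ℕ} {A : ℕ} {ℓ : ℕ → ℕ}
    (hiff : ∀ i j, T i j ≠ 0 ↔ i < A ∧ j < ℓ i) :
    {p : ℕ × ℕ | T p.1 p.2 ≠ 0}
      = ↑((Finset.range A).biUnion (fun i => (Finset.range (ℓ i)).image (fun j => (i, j)))) := by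
  ext p
  obtain ⟨a, b⟩ := p
  simp only [Set.mem_setOf_eq, hiff a b, Finset.mem_coe, Finset.mem_biUnion, Finset.mem_range,
    Finset.mem_image, Prod.mk.injEq]
  constructor
  · rintro ⟨h1, h2⟩
    exact ⟨a, h1, b, h2, rfl, rfl⟩
  · rintro ⟨i, hi, j, hj, rfl, rfl⟩
    exact ⟨hi, hj⟩

lemma card_shape {A : ℕ} {ℓ : ℕ → ℕ} :
    ((Finset.range A).biUnion (fun i => (Finset.range (ℓ i)).image (fun j => (i, j)))).card
      = ∑ i ∈ Finset.range A, ℓ i := by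
  rw [Finset.card_biUnion]
  · apply Finset.sum_congr rfl
    intro i _
    rw [Finset.card_image_of_injective _ (fun a b hab => by simpa using hab), Finset.card_range]
  · intro x _ y _ hxy
    rw [Function.onFun, Finset.disjoint_left]
    rintro ⟨a, b⟩ h1 h2
    simp only [Finset.mem_image, Finset.mem_range, Prod.mk.injEq] at h1 h2
    obtain ⟨j, _, rfl, rfl⟩ := h1
    obtain ⟨j', _, rfl, _⟩ := h2
    exact hxy rfl

lemma tabSize_eq_sum {T : ℕ → ℕ → ℕ} {A : ℕ} {ℓ : ℕ → ℕ}
    (hiff : ∀ i j, T i j ≠ 0 ↔ i < A ∧ j < ℓ i) :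
    tabSize T = ∑ i ∈ Finset.range A, ℓ i := by
  rw [tabSize, support_eq hiff, Set.ncard_coe_finset, card_shape]

/-- per-row count of a value for a strictly increasing row -/
lemma row_value_card {f : ℕ → ℕ} {ρ k : ℕ} (hk : k ≠ 0)
    (hmono : ∀ a b, a < b → b < ρ → f a < f b) (hz : ∀ l, ρ ≤ l → f l = 0) :
    ∀ N, ρ ≤ N → ((Finset.range N).filter (fun j => f j = k)).card
      = (if k ∈ Vrow f ρ then 1 else 0) := by
  intro N hN
  by_cases hmem : k ∈ Vrow f ρ
  · rw [if_pos hmem]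
    obtain ⟨l, hl, hlk⟩ := mem_Vrow.1 hmem
    rw [Finset.card_eq_one]
    refine ⟨l, ?_⟩
    ext x
    simp only [Finset.mem_filter, Finset.mem_range, Finset.mem_singleton]
    constructor
    · rintro ⟨hx, hfx⟩
      have hxρ : x < ρ := by
        by_contra hc
        push_neg at hc
        rw [hz x hc] at hfx
        omega
      rcases lt_trichotomy x l with h | h | h
      · have := hmono x l h hl; omega
      · exact h
      · have := hmono l x h hxρ; omega
    · rintro rfl
      exact ⟨by omega, hlk⟩
  · rw [if_neg hmem]
    rw [Finset.card_eq_zero, Finset.filter_eq_empty_iff]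
    intro x hx
    intro hfx
    apply hmem
    rw [mem_Vrow]
    refine ⟨x, ?_, hfx⟩
    by_contra hc
    push_neg at hc
    rw [hz x hc] at hfx
    omega

/-- counting boxes with a given value, row by row -/
lemma value_ncard {T : ℕ → ℕ → ℕ} {A : ℕ} {ℓ : ℕ → ℕ} {k : ℕ} (hk : k ≠ 0)
    (hiff : ∀ i j, T i j ≠ 0 ↔ i < A ∧ j < ℓ i)
    (hmono : ∀ i, i < A → ∀ a b, a < b → b < ℓ i → T i a < T i b) :
    {p : ℕ × ℕ | T p.1 p.2 = k}.ncard
      = ((Finset.range A).filter (fun i => k ∈ Vrow (T i) (ℓ i))).card := by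
  classical
  set F := (Finset.range A).biUnion
    (fun i => (Finset.range (ℓ i)).image (fun j => (i, j))) with hF
  have hset : {p : ℕ × ℕ | T p.1 p.2 = k} = ↑(F.filter (fun p => T p.1 p.2 = k)) := by
    ext ⟨a, b⟩
    simp only [Set.mem_setOf_eq, Finset.coe_filter, Set.mem_setOf_eq, Finset.mem_coe]
    constructor
    · intro h
      have hne : T a b ≠ 0 := by omega
      have := (hiff a b).1 hne
      refine ⟨?_, h⟩
      rw [hF]
      simp only [Finset.mem_biUnion, Finset.mem_range, Finset.mem_image]
      exact ⟨a, this.1, b, this.2, rfl⟩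
    · exact fun h => h.2
  rw [hset, Set.ncard_coe_finset]
  rw [Finset.card_eq_sum_card_fiberwise (f := Prod.fst) (t := Finset.range A)
    (by
      intro p hp
      obtain ⟨a, b⟩ := p
      simp only [Finset.mem_coe, Finset.mem_filter, hF, Finset.mem_biUnion, Finset.mem_range,
        Finset.mem_image] at hp
      obtain ⟨⟨i, hi, j, hj, he⟩, _⟩ := hp
      obtain ⟨rfl, rfl⟩ : i = a ∧ j = b := by simpa [Prod.ext_iff] using he
      simpa using hi)]
  rw [Finset.card_filter (fun i => k ∈ Vrow (T i) (ℓ i))]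
  apply Finset.sum_congr rfl
  intro i hi
  have hiA : i < A := Finset.mem_range.1 hi
  have hfib : (F.filter (fun p => T p.1 p.2 = k)).filter (fun p => p.1 = i)
      = ((Finset.range (ℓ i)).filter (fun j => T i j = k)).image (fun j => (i, j)) := by
    ext ⟨a, b⟩
    simp only [Finset.mem_filter, hF, Finset.mem_biUnion, Finset.mem_range, Finset.mem_image,
      Prod.mk.injEq]
    constructor
    · rintro ⟨⟨⟨i', hi', j, hj, rfl, rfl⟩, hval⟩, rfl⟩
      exact ⟨j, ⟨hj, hval⟩, rfl, rfl⟩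
    · rintro ⟨j, ⟨hj, hval⟩, rfl, rfl⟩
      exact ⟨⟨⟨i, hiA, j, hj, rfl, rfl⟩, hval⟩, rfl⟩
  rw [hfib, Finset.card_image_of_injective _ (fun a b hab => by simpa using hab)]
  have hz : ∀ l, ℓ i ≤ l → T i l = 0 := by
    intro l hl
    by_contra hc
    have := (hiff i l).1 hc
    omega
  exact row_value_card hk (hmono i hiA) hz (ℓ i) le_rfl

/-! ### Layer 3: column prepending/removal, psi, strips -/

def prep (r m : ℕ) (T : ℕ → ℕ → ℕ) : ℕ → ℕ → ℕ := fun i j =>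
  if j < m then (if i < r + 1 then i + 1 else 0) else T i (j - m)

def rem (m : ℕ) (T : ℕ → ℕ → ℕ) : ℕ → ℕ → ℕ := fun i j => T i (j + m)

lemma psi_eq (g r d : ℕ) (B : ℕ → ℕ → ℕ) :
    psi g r d B = if d ≤ g + r then prep r (g + r - d) B else rem (d - (g + r)) B := by
  unfold psi prep rem
  split <;> rfl

lemma rem_prep (r m : ℕ) (T : ℕ → ℕ → ℕ) : rem m (prep r m T) = T := by
  funext i j
  simp [rem, prep]

lemma prep_rem {r m : ℕ} {T : ℕ → ℕ → ℕ}
    (hfull : ∀ i j, i < r + 1 → j < m → T i j = i + 1)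
    (hzero : ∀ i j, r + 1 ≤ i → T i j = 0) : prep r m (rem m T) = T := by
  funext i j
  simp only [prep, rem]
  split
  · split
    · exact (hfull i j ‹_› ‹_›).symm
    · exact (hzero i j (by omega)).symm
  · congr 1
    omega

lemma isSSYT_rem {m : ℕ} {T : ℕ → ℕ → ℕ} (hT : IsSSYT T) : IsSSYT (rem m T) := by
  obtain ⟨h1, h2, h3, h4⟩ := hT
  refine ⟨fun i j h => ?_, fun i j h => h2 i (j + m) h, fun i j h => ?_,
    fun i j h => h4 i (j + m) h⟩
  · have h' : T i ((j + m) + 1) ≠ 0 := by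
      have he : j + 1 + m = (j + m) + 1 := by omega
      simpa only [rem, he] using h
    exact h1 i (j + m) h'
  · have he : j + 1 + m = (j + m) + 1 := by omega
    have h' : T i ((j + m) + 1) ≠ 0 := by simpa only [rem, he] using h
    have := h3 i (j + m) h'
    simpa only [rem, he] using this

lemma rem_bd {r m : ℕ} {T : ℕ → ℕ → ℕ} (hbd : ∀ i j, T i j ≠ 0 → T i j ≤ r + 1) :
    ∀ i j, rem m T i j ≠ 0 → rem m T i j ≤ r + 1 := fun i j h => hbd i (j + m) h

lemma prep_apply_ge {r m : ℕ} {T : ℕ → ℕ → ℕ} {i j : ℕ} (h : m ≤ j) :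
    prep r m T i j = T i (j - m) := by
  simp only [prep]
  rw [if_neg (by omega)]

lemma prep_apply_lt {r m : ℕ} {T : ℕ → ℕ → ℕ} {i j : ℕ} (h : j < m) (hi : i < r + 1) :
    prep r m T i j = i + 1 := by
  simp only [prep]
  rw [if_pos h, if_pos hi]

lemma prep_zero_row {r m : ℕ} {T : ℕ → ℕ → ℕ} {i j : ℕ} (h : j < m) (hi : ¬ i < r + 1) :
    prep r m T i j = 0 := by
  simp only [prep]
  rw [if_pos h, if_neg hi]

lemma prep_add {r m : ℕ} {T : ℕ → ℕ → ℕ} {i j : ℕ} : prep r m T i (j + m) = T i j := by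
  rw [prep_apply_ge (by omega), Nat.add_sub_cancel]

lemma isSSYT_prep {r m : ℕ} {T : ℕ → ℕ → ℕ} (hT : IsSSYT T)
    (hbd : ∀ i j, T i j ≠ 0 → T i j ≤ r + 1) : IsSSYT (prep r m T) := by
  refine ⟨fun i j h => ?_, fun i j h => ?_, fun i j h => ?_, fun i j h => ?_⟩
  · -- row prefix
    have hi : i < r + 1 := by
      by_contra hc
      rcases lt_or_ge (j + 1) m with hm | hm
      · exact h (prep_zero_row hm hc)
      · rw [prep_apply_ge (by omega)] at h
        exact h (zero_of_row_ge hT hbd _ _ (by omega))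
    by_cases h1 : j + 1 < m
    · rw [prep_apply_lt (by omega) hi]
      omega
    · by_cases h2 : j < m
      · rw [prep_apply_lt h2 hi]
        omega
      · rw [prep_apply_ge (by omega)] at h ⊢
        rw [show j + 1 - m = (j - m) + 1 from by omega] at h
        exact hT.1 i (j - m) h
  · -- column prefix
    have hi : i + 1 < r + 1 := by
      by_contra hc
      rcases lt_or_ge j m with hm | hm
      · exact h (prep_zero_row hm hc)
      · rw [prep_apply_ge hm] at h
        exact h (zero_of_row_ge hT hbd _ _ (by omega))
    by_cases h1 : j < m
    · rw [prep_apply_lt h1 (by omega)]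
      omega
    · rw [prep_apply_ge (by omega)] at h ⊢
      exact hT.2.1 i (j - m) h
  · -- rows weakly increase
    have hi : i < r + 1 := by
      by_contra hc
      rcases lt_or_ge (j + 1) m with hm | hm
      · exact h (prep_zero_row hm hc)
      · rw [prep_apply_ge (by omega)] at h
        exact h (zero_of_row_ge hT hbd _ _ (by omega))
    by_cases h1 : j + 1 < m
    · rw [prep_apply_lt (by omega) hi, prep_apply_lt h1 hi]
    · by_cases h2 : j < m
      · rw [prep_apply_lt h2 hi, prep_apply_ge (by omega)]
        rw [prep_apply_ge (by omega)] at h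
        exact row_ge hT i (j + 1 - m) h
      · rw [prep_apply_ge (by omega)] at h
        rw [prep_apply_ge (by omega : m ≤ j), prep_apply_ge (by omega : m ≤ j + 1)]
        rw [show j + 1 - m = (j - m) + 1 from by omega] at h ⊢
        exact hT.2.2.1 i (j - m) h
  · -- columns strictly increase
    have hi : i + 1 < r + 1 := by
      by_contra hc
      rcases lt_or_ge j m with hm | hm
      · exact h (prep_zero_row hm hc)
      · rw [prep_apply_ge hm] at h
        exact h (zero_of_row_ge hT hbd _ _ (by omega))
    by_cases h1 : j < m
    · rw [prep_apply_lt h1 (by omega : i < r + 1), prep_apply_lt h1 hi]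
      omega
    · rw [prep_apply_ge (by omega)] at h
      rw [prep_apply_ge (by omega : m ≤ j), prep_apply_ge (by omega : m ≤ j)]
      exact hT.2.2.2 i (j - m) h

lemma prep_bd {r m : ℕ} {T : ℕ → ℕ → ℕ} (hbd : ∀ i j, T i j ≠ 0 → T i j ≤ r + 1) :
    ∀ i j, prep r m T i j ≠ 0 → prep r m T i j ≤ r + 1 := by
  intro i j h
  simp only [prep] at h ⊢
  by_cases h1 : j < m
  · rw [if_pos h1] at h ⊢
    by_cases h2 : i < r + 1
    · rw [if_pos h2]
      omega
    · rw [if_neg h2] at h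
      omega
  · rw [if_neg h1] at h ⊢
    exact hbd _ _ h

lemma prep_ne_iff {r m : ℕ} {T : ℕ → ℕ → ℕ} {ℓ : ℕ → ℕ}
    (hiff : ∀ i j, T i j ≠ 0 ↔ i < r + 1 ∧ j < ℓ i) :
    ∀ i j, prep r m T i j ≠ 0 ↔ i < r + 1 ∧ j < m + ℓ i := by
  intro i j
  simp only [prep]
  split
  · split <;> omega
  · rw [hiff]
    omega

lemma rem_ne_iff {m : ℕ} {T : ℕ → ℕ → ℕ} {r : ℕ} {ℓ : ℕ → ℕ}
    (hiff : ∀ i j, T i j ≠ 0 ↔ i < r + 1 ∧ j < ℓ i) :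
    ∀ i j, rem m T i j ≠ 0 ↔ i < r + 1 ∧ j < ℓ i - m := by
  intro i j
  rw [rem, hiff]
  omega

/-- Strip transfer: strips of `prep r m T` of length `ℓ + m` correspond to strips of `T`
of length `ℓ`, provided `T` is an SSYT with bounded entries. -/
lemma hasIStrip_prep_iff {r m : ℕ} {T : ℕ → ℕ → ℕ} (hT : IsSSYT T)
    (hbd : ∀ i j, T i j ≠ 0 → T i j ≤ r + 1) {i ℓ : ℕ} (hi : 1 ≤ i) (hir : i ≤ r) :
    HasIStrip (prep r m T) i (ℓ + m) ↔ HasIStrip T i ℓ := by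
  constructor
  · rintro ⟨s, hne, hmono, hval, hord⟩
    refine ⟨fun j => s (j + m), fun j hj => ?_, fun j j' hjj' hj' => ?_, fun j hj => ?_,
      fun j j' hj hj' hvi hvi' => ?_⟩
    · have h0 := hne (j + m) (by omega)
      rwa [prep_add] at h0
    · exact hmono (j + m) (j' + m) (by omega) (by omega)
    · have h0 := hval (j + m) (by omega)
      rwa [prep_add] at h0
    · have h0 := hord (j + m) (j' + m) (by omega) (by omega)
        (by rw [prep_add]; exact hvi) (by rw [prep_add]; exact hvi')
      omega
  · rintro ⟨s, hne, hmono, hval, hord⟩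
    by_cases hasI : ∃ j0, j0 < ℓ ∧ T (s j0) j0 = i
    · -- prefix boxes are `i`s in row `i - 1`
      obtain ⟨j0, hj0, hv0⟩ := hasI
      have hrows : ∀ j, j < ℓ → s j ≤ i - 1 := by
        intro j hj
        rcases hval j hj with hv | hv
        · have := row_ge hT (s j) j (by omega)
          omega
        · have hlt := hord j0 j hj0 hj hv0 hv
          have hle := hmono j0 j hlt hj
          have := row_ge hT (s j0) j0 (by omega)
          omega
      refine ⟨fun j => if j < m then i - 1 else s (j - m), fun j hj => ?_,
        fun j j' hjj' hj' => ?_, fun j hj => ?_, fun j j' hj hj' hvi hvi' => ?_⟩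
      · show prep r m T (if j < m then i - 1 else s (j - m)) j ≠ 0
        by_cases h1 : j < m
        · rw [if_pos h1, prep_apply_lt h1 (by omega)]
          omega
        · rw [if_neg h1, prep_apply_ge (by omega)]
          exact hne (j - m) (by omega)
      · show (if j' < m then i - 1 else s (j' - m)) ≤ (if j < m then i - 1 else s (j - m))
        by_cases h1 : j' < m
        · rw [if_pos h1, if_pos (show j < m by omega)]
        · by_cases h2 : j < m
          · rw [if_neg h1, if_pos h2]
            exact hrows (j' - m) (by omega)
          · rw [if_neg h1, if_neg h2]
            exact hmono (j - m) (j' - m) (by omega) (by omega)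
      · show prep r m T (if j < m then i - 1 else s (j - m)) j = i ∨
          prep r m T (if j < m then i - 1 else s (j - m)) j = i + 1
        by_cases h1 : j < m
        · rw [if_pos h1, prep_apply_lt h1 (by omega)]
          left
          omega
        · rw [if_neg h1, prep_apply_ge (by omega)]
          exact hval (j - m) (by omega)
      · -- order condition
        by_cases h1 : j < m
        · by_cases h2 : j' < m
          · exfalso
            rw [show (fun j => if j < m then i - 1 else s (j - m)) j' = i - 1 from if_pos h2,
              prep_apply_lt h2 (by omega)] at hvi'
            omega
          · omega
        · by_cases h2 : j' < m
          · exfalso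
            rw [show (fun j => if j < m then i - 1 else s (j - m)) j' = i - 1 from if_pos h2,
              prep_apply_lt h2 (by omega)] at hvi'
            omega
          · rw [show (fun j => if j < m then i - 1 else s (j - m)) j = s (j - m) from if_neg h1,
              prep_apply_ge (by omega)] at hvi
            rw [show (fun j => if j < m then i - 1 else s (j - m)) j' = s (j' - m) from if_neg h2,
              prep_apply_ge (by omega)] at hvi'
            have := hord (j - m) (j' - m) (by omega) (by omega) hvi hvi'
            omega
    · -- no `i` in the strip: all values are `i+1`, rows ≤ i; prefix in row i
      push_neg at hasI
      have hval' : ∀ j, j < ℓ → T (s j) j = i + 1 := by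
        intro j hj
        rcases hval j hj with hv | hv
        · exact absurd hv (hasI j hj)
        · exact hv
      have hrows : ∀ j, j < ℓ → s j ≤ i := by
        intro j hj
        have h0 := row_ge hT (s j) j (by rw [hval' j hj]; omega)
        rw [hval' j hj] at h0
        omega
      refine ⟨fun j => if j < m then i else s (j - m), fun j hj => ?_,
        fun j j' hjj' hj' => ?_, fun j hj => ?_, fun j j' hj hj' hvi hvi' => ?_⟩
      · show prep r m T (if j < m then i else s (j - m)) j ≠ 0
        by_cases h1 : j < m
        · rw [if_pos h1, prep_apply_lt h1 (by omega)]
          omega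
        · rw [if_neg h1, prep_apply_ge (by omega)]
          exact hne (j - m) (by omega)
      · show (if j' < m then i else s (j' - m)) ≤ (if j < m then i else s (j - m))
        by_cases h1 : j' < m
        · rw [if_pos h1, if_pos (show j < m by omega)]
        · by_cases h2 : j < m
          · rw [if_neg h1, if_pos h2]
            exact hrows (j' - m) (by omega)
          · rw [if_neg h1, if_neg h2]
            exact hmono (j - m) (j' - m) (by omega) (by omega)
      · show prep r m T (if j < m then i else s (j - m)) j = i ∨
          prep r m T (if j < m then i else s (j - m)) j = i + 1
        by_cases h1 : j < m
        · rw [if_pos h1, prep_apply_lt h1 (by omega)]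
          right
          rfl
        · rw [if_neg h1, prep_apply_ge (by omega)]
          right
          exact hval' (j - m) (by omega)
      · exfalso
        by_cases h1 : j < m
        · rw [show (fun j => if j < m then i else s (j - m)) j = i from if_pos h1,
            prep_apply_lt h1 (by omega)] at hvi
          omega
        · rw [show (fun j => if j < m then i else s (j - m)) j = s (j - m) from if_neg h1,
            prep_apply_ge (by omega)] at hvi
          exact (hasI (j - m) (by omega)) hvi

/-! ### Layer 4: the phi package -/

noncomputable def Cset (g : ℕ) (X : ℕ → ℕ → ℕ) (i : ℕ) : Finset ℕ :=
  (Finset.Icc 1 g).filter (fun k => ∀ l ∈ Finset.range g, X i l ≠ k)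

lemma phiMap_apply (g r : ℕ) (X : ℕ → ℕ → ℕ) (i j : ℕ) :
    phiMap g r X i j = if i < r + 1 then selD (Cset g X i) j else 0 := rfl

lemma Vrow_selD (S : Finset ℕ) : Vrow (selD S) S.card = S := by
  ext k
  rw [mem_Vrow]
  constructor
  · rintro ⟨j, hj, rfl⟩
    exact selD_mem hj
  · intro hk
    exact selD_surj hk

lemma prefix_ge {f : ℕ → ℕ} {ρ : ℕ} (hmono : ∀ a b, a < b → b < ρ → f a < f b)
    (hpos : ∀ l, l < ρ → f l ≠ 0) : ∀ l, l < ρ → l + 1 ≤ f l := by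
  intro l
  induction l with
  | zero => intro h; have := hpos 0 h; omega
  | succ l ih =>
    intro h
    have h1 := ih (by omega)
    have h2 := hmono l (l + 1) (by omega) h
    omega

section phiPackage

variable {g r : ℕ} {X : ℕ → ℕ → ℕ} {ℓ : ℕ → ℕ}

/-- the row-system bundle -/
def RowSys (g r : ℕ) (X : ℕ → ℕ → ℕ) (ℓ : ℕ → ℕ) : Prop :=
  (∀ i j, X i j ≠ 0 ↔ i < r + 1 ∧ j < ℓ i) ∧
  (∀ i, i < r + 1 → ∀ a b, a < b → b < ℓ i → X i a < X i b) ∧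
  (∀ i j, X i j ≠ 0 → X i j ≤ g)

lemma RowSys.len_le (h : RowSys g r X ℓ) : ∀ i, i < r + 1 → ℓ i ≤ g := by
  intro i hi
  rcases Nat.eq_zero_or_pos (ℓ i) with h0 | h0
  · omega
  · have hne : X i (ℓ i - 1) ≠ 0 := (h.1 i _).2 ⟨hi, by omega⟩
    have hge := prefix_ge (h.2.1 i hi) (fun l hl => (h.1 i l).2 ⟨hi, hl⟩) (ℓ i - 1) (by omega)
    have hle := h.2.2 i (ℓ i - 1) hne
    omega

lemma RowSys.Vrow_eq (h : RowSys g r X ℓ) {i : ℕ} (hi : i < r + 1) :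
    Vrow (X i) (ℓ i) = (Finset.Icc 1 g).filter (fun k => ¬ ∀ l ∈ Finset.range g, X i l ≠ k) := by
  ext k
  rw [mem_Vrow]
  simp only [Finset.mem_filter, Finset.mem_Icc, Finset.mem_range, not_forall]
  constructor
  · rintro ⟨l, hl, rfl⟩
    have hne : X i l ≠ 0 := (h.1 i l).2 ⟨hi, hl⟩
    have hbd := h.2.2 i l hne
    have hlg : l < g := lt_of_lt_of_le hl (h.len_le i hi)
    exact ⟨⟨by omega, hbd⟩, l, hlg, by simp⟩
  · rintro ⟨⟨hk1, hk2⟩, l, hl, he⟩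
    simp only [not_not] at he
    have : X i l ≠ 0 := by omega
    exact ⟨l, ((h.1 i l).1 this).2, he⟩

lemma RowSys.Vrow_subset (h : RowSys g r X ℓ) {i : ℕ} (hi : i < r + 1) :
    Vrow (X i) (ℓ i) ⊆ Finset.Icc 1 g := by
  rw [h.Vrow_eq hi]
  exact Finset.filter_subset _ _

lemma RowSys.Cset_eq (h : RowSys g r X ℓ) {i : ℕ} (hi : i < r + 1) :
    Cset g X i = (Finset.Icc 1 g).filter (fun k => k ∉ Vrow (X i) (ℓ i)) := by
  rw [Cset]
  apply Finset.filter_congr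
  intro k hk
  rw [h.Vrow_eq hi]
  simp only [Finset.mem_filter, not_and, not_not, eq_iff_iff]
  constructor
  · intro ha _
    exact ha
  · intro h2
    exact h2 hk

lemma compl_compl_filter {V : Finset ℕ} {g : ℕ} (hV : V ⊆ Finset.Icc 1 g) :
    (Finset.Icc 1 g).filter (fun k => k ∉ (Finset.Icc 1 g).filter (fun k' => k' ∉ V)) = V := by
  ext x
  simp only [Finset.mem_filter, not_and, not_not]
  constructor
  · rintro ⟨hx, hx2⟩
    exact hx2 hx
  · intro hx
    exact ⟨hV hx, fun _ => hx⟩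

lemma card_compl {V : Finset ℕ} {g : ℕ} (hV : V ⊆ Finset.Icc 1 g) :
    ((Finset.Icc 1 g).filter (fun k => k ∉ V)).card = g - V.card := by
  classical
  have h1 := Finset.card_filter_add_card_filter_not
    (s := Finset.Icc 1 g) (p := fun k => k ∉ V)
  have h2 : (Finset.Icc 1 g).filter (fun k => ¬ k ∉ V) = V := by
    ext x
    simp only [Finset.mem_filter, not_not]
    exact ⟨fun h => h.2, fun h => ⟨hV h, h⟩⟩
  rw [h2] at h1
  have h3 : (Finset.Icc 1 g).card = g := by rw [Nat.card_Icc]; omega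
  omega

lemma RowSys.card_Cset (h : RowSys g r X ℓ) {i : ℕ} (hi : i < r + 1) :
    (Cset g X i).card = g - ℓ i := by
  rw [h.Cset_eq hi, card_compl (h.Vrow_subset hi), card_Vrow (h.2.1 i hi)]

lemma Cset_subset (g : ℕ) (X : ℕ → ℕ → ℕ) (i : ℕ) : Cset g X i ⊆ Finset.Icc 1 g :=
  Finset.filter_subset _ _

lemma Cset_pos {g : ℕ} {X : ℕ → ℕ → ℕ} {i : ℕ} : ∀ x ∈ Cset g X i, 1 ≤ x := by
  intro x hx
  have := Cset_subset g X i hx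
  exact (Finset.mem_Icc.1 this).1

lemma RowSys.phi_ne_iff (h : RowSys g r X ℓ) :
    ∀ i j, phiMap g r X i j ≠ 0 ↔ i < r + 1 ∧ j < g - ℓ i := by
  intro i j
  rw [phiMap_apply]
  by_cases hi : i < r + 1
  · rw [if_pos hi, selD_ne_zero_iff Cset_pos, h.card_Cset hi]
    tauto
  · rw [if_neg hi]
    tauto

/-- `phiMap` of a row system is a row system (with complementary lengths). -/
lemma RowSys.phi (h : RowSys g r X ℓ) : RowSys g r (phiMap g r X) (fun i => g - ℓ i) := by
  refine ⟨h.phi_ne_iff, ?_, ?_⟩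
  · intro i hi a b hab hb
    rw [phiMap_apply, phiMap_apply, if_pos hi, if_pos hi]
    exact selD_strictMono hab (by rw [h.card_Cset hi]; exact hb)
  · intro i j hne
    rw [phiMap_apply] at hne ⊢
    by_cases hi : i < r + 1
    · rw [if_pos hi] at hne ⊢
      have hj : j < (Cset g X i).card := by
        by_contra hc
        exact hne (selD_eq_zero (by omega))
      have := selD_mem hj
      exact (Finset.mem_Icc.1 (Cset_subset g X i this)).2
    · rw [if_neg hi] at hne
      omega

lemma RowSys.Vrow_phi (h : RowSys g r X ℓ) {i : ℕ} (hi : i < r + 1) :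
    Vrow (phiMap g r X i) (g - ℓ i) = Cset g X i := by
  have he : phiMap g r X i = selD (Cset g X i) := by
    funext j
    rw [phiMap_apply, if_pos hi]
  rw [he, ← h.card_Cset hi, Vrow_selD]

/-- double complement: `phiMap` is an involution on row systems -/
lemma RowSys.phi_phi (h : RowSys g r X ℓ) : phiMap g r (phiMap g r X) = X := by
  funext i j
  by_cases hi : i < r + 1
  · have hccard : (Cset g (phiMap g r X) i).card = ℓ i := by
      rw [(h.phi).card_Cset hi]
      have := h.len_le i hi
      omega
    have hcc : Cset g (phiMap g r X) i = Vrow (X i) (ℓ i) := by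
      rw [(h.phi).Cset_eq hi, h.Vrow_phi hi, h.Cset_eq hi,
        compl_compl_filter (h.Vrow_subset hi)]
    rw [phiMap_apply, if_pos hi, hcc]
    by_cases hj : j < ℓ i
    · exact selD_Vrow (h.2.1 i hi) hj
    · rw [selD_eq_zero (by rw [card_Vrow (h.2.1 i hi)]; omega)]
      by_contra hc
      have := (h.1 i j).1 (fun he => hc he.symm)
      omega
  · rw [phiMap_apply, if_neg hi]
    by_contra hc
    have := (h.1 i j).1 (fun he => hc he.symm)
    omega

/-- membership transfer: `k` lies in row `i` of `phiMap X` iff it does not lie in row `i` of `X` -/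
lemma RowSys.mem_phi_row (h : RowSys g r X ℓ) {i k : ℕ} (hi : i < r + 1)
    (hk1 : 1 ≤ k) (hkg : k ≤ g) :
    (k ∈ Vrow (phiMap g r X i) (g - ℓ i) ↔ k ∉ Vrow (X i) (ℓ i)) := by
  rw [h.Vrow_phi hi, h.Cset_eq hi]
  simp only [Finset.mem_filter, Finset.mem_Icc]
  constructor
  · exact fun hh => hh.2
  · exact fun hh => ⟨⟨hk1, hkg⟩, hh⟩

end phiPackage

/-! ### Layer 4b: columns and content under phi -/

section phiCols

variable {g r : ℕ} {X : ℕ → ℕ → ℕ} {ℓ : ℕ → ℕ}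

lemma RowSys.rank_Cset (h : RowSys g r X ℓ) {i : ℕ} (hi : i < r + 1) (a : ℕ) :
    rank (Cset g X i) a + rank (Vrow (X i) (ℓ i)) a = min g a := by
  rw [h.Cset_eq hi]
  exact rank_compl_add (h.Vrow_subset hi) a

/-- mode Q→R: strictly increasing columns of `X` give weakly decreasing columns of `phiMap X` -/
lemma RowSys.phi_col_mono (h : RowSys g r X ℓ) {i : ℕ} (hi : i + 1 < r + 1)
    (hlen : ℓ (i + 1) ≤ ℓ i)
    (hcol : ∀ l, l < ℓ (i + 1) → X i l < X (i + 1) l) :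
    ∀ j, j < g - ℓ i → phiMap g r X (i + 1) j ≤ phiMap g r X i j := by
  intro j hj
  rw [phiMap_apply, phiMap_apply, if_pos hi, if_pos (show i < r + 1 by omega)]
  have hrankV : ∀ a, rank (Vrow (X (i + 1)) (ℓ (i + 1))) a ≤ rank (Vrow (X i) (ℓ i)) a := by
    intro a
    rw [rank_Vrow (h.2.1 (i + 1) hi), rank_Vrow (h.2.1 i (by omega))]
    apply Finset.card_le_card
    intro l hl
    simp only [Finset.mem_filter, Finset.mem_range] at hl ⊢
    have := hcol l hl.1
    omega
  have hrankC : ∀ a, rank (Cset g X i) a ≤ rank (Cset g X (i + 1)) a := by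
    intro a
    have h1 := h.rank_Cset (show i < r + 1 by omega) a
    have h2 := h.rank_Cset hi a
    have := hrankV a
    omega
  apply selD_le_selD_of_rank hrankC
  · rw [h.card_Cset (show i < r + 1 by omega)]
    omega
  · rw [h.card_Cset hi]
    omega

/-- mode R→Q: weakly decreasing columns plus the content condition give strictly
increasing columns of `phiMap X` -/
lemma RowSys.phi_col_strict (h : RowSys g r X ℓ)
    (hcont : ∀ k, 1 ≤ k → k ≤ g →
      ((Finset.range (r + 1)).filter (fun i' => k ∈ Vrow (X i') (ℓ i'))).card = r)
    {i : ℕ} (hi : i + 1 < r + 1) (hlen : ℓ i ≤ ℓ (i + 1))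
    (hcol : ∀ l, l < ℓ i → X (i + 1) l ≤ X i l) :
    ∀ j, j < g - ℓ (i + 1) → phiMap g r X i j < phiMap g r X (i + 1) j := by
  intro j hj
  have hjcard1 : j < (Cset g X (i + 1)).card := by
    rw [h.card_Cset hi]; omega
  have hjcard0 : j < (Cset g X i).card := by
    rw [h.card_Cset (show i < r + 1 by omega)]; omega
  rw [phiMap_apply, phiMap_apply, if_pos hi, if_pos (show i < r + 1 by omega)]
  have hrankV : ∀ a, rank (Vrow (X i) (ℓ i)) a ≤ rank (Vrow (X (i + 1)) (ℓ (i + 1))) a := by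
    intro a
    rw [rank_Vrow (h.2.1 i (by omega)), rank_Vrow (h.2.1 (i + 1) hi)]
    apply Finset.card_le_card
    intro l hl
    simp only [Finset.mem_filter, Finset.mem_range] at hl ⊢
    have := hcol l hl.1
    omega
  have hrankC : ∀ a, rank (Cset g X (i + 1)) a ≤ rank (Cset g X i) a := by
    intro a
    have h1 := h.rank_Cset (show i < r + 1 by omega) a
    have h2 := h.rank_Cset hi a
    have := hrankV a
    omega
  have hle : selD (Cset g X i) j ≤ selD (Cset g X (i + 1)) j :=
    selD_le_selD_of_rank hrankC hjcard1 hjcard0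
  apply lt_of_le_of_ne hle
  intro heq
  have hkmem : selD (Cset g X i) j ∈ Cset g X i := selD_mem hjcard0
  have hkmem' : selD (Cset g X i) j ∈ Cset g X (i + 1) := by
    rw [heq]
    exact selD_mem hjcard1
  generalize hgen : selD (Cset g X i) j = k at hkmem hkmem'
  have hkIcc : k ∈ Finset.Icc 1 g := Cset_subset g X i hkmem
  have hni : k ∉ Vrow (X i) (ℓ i) := by
    have := (h.Cset_eq (show i < r + 1 by omega)) ▸ hkmem
    exact (Finset.mem_filter.1 this).2
  have hni' : k ∉ Vrow (X (i + 1)) (ℓ (i + 1)) := by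
    have := (h.Cset_eq hi) ▸ hkmem'
    exact (Finset.mem_filter.1 this).2
  have hk1 := (Finset.mem_Icc.1 hkIcc).1
  have hkg := (Finset.mem_Icc.1 hkIcc).2
  have h5 := Finset.card_filter_add_card_filter_not
    (s := Finset.range (r + 1)) (p := fun i' => k ∈ Vrow (X i') (ℓ i'))
  rw [hcont k hk1 hkg, Finset.card_range] at h5
  have hsub : ({i, i + 1} : Finset ℕ)
      ⊆ (Finset.range (r + 1)).filter (fun i' => ¬ k ∈ Vrow (X i') (ℓ i')) := by
    intro x hx
    simp only [Finset.mem_insert, Finset.mem_singleton] at hx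
    rcases hx with rfl | rfl
    · exact Finset.mem_filter.2 ⟨Finset.mem_range.2 (by omega), hni⟩
    · exact Finset.mem_filter.2 ⟨Finset.mem_range.2 (by omega), hni'⟩
  have h2le := Finset.card_le_card hsub
  rw [Finset.card_insert_of_notMem (by simp only [Finset.mem_singleton]; omega),
    Finset.card_singleton] at h2le
  omega

lemma RowSys.ncard_value (h : RowSys g r X ℓ) {k : ℕ} (hk : k ≠ 0) :
    {p : ℕ × ℕ | X p.1 p.2 = k}.ncard
      = ((Finset.range (r + 1)).filter (fun i => k ∈ Vrow (X i) (ℓ i))).card :=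
  value_ncard hk h.1 h.2.1

lemma RowSys.content_phi (h : RowSys g r X ℓ) {k : ℕ} (hk1 : 1 ≤ k) (hkg : k ≤ g) :
    ((Finset.range (r + 1)).filter (fun i => k ∈ Vrow (phiMap g r X i) (g - ℓ i))).card
      + ((Finset.range (r + 1)).filter (fun i => k ∈ Vrow (X i) (ℓ i))).card = r + 1 := by
  have hcong : (Finset.range (r + 1)).filter (fun i => k ∈ Vrow (phiMap g r X i) (g - ℓ i))
      = (Finset.range (r + 1)).filter (fun i => ¬ k ∈ Vrow (X i) (ℓ i)) := by
    apply Finset.filter_congr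
    intro i hi
    exact h.mem_phi_row (Finset.mem_range.1 hi) hk1 hkg
  rw [hcong]
  have h5 := Finset.card_filter_add_card_filter_not
    (s := Finset.range (r + 1)) (p := fun i' => k ∈ Vrow (X i') (ℓ i'))
  rw [Finset.card_range] at h5
  omega

end phiCols

/-! ### Layer 4c: helpers for assembly -/

lemma strict_of_adj {f : ℕ → ℕ} {ρ : ℕ} (hiff : ∀ j, f j ≠ 0 ↔ j < ρ)
    (hadj : ∀ j, f (j + 1) ≠ 0 → f j < f (j + 1)) :
    ∀ a b, a < b → b < ρ → f a < f b := by
  intro a b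
  induction b with
  | zero => omega
  | succ b ih =>
    intro hab hb
    have hb1 : f (b + 1) ≠ 0 := (hiff _).2 hb
    have hstep := hadj b hb1
    rcases Nat.lt_or_ge a b with h | h
    · exact lt_trans (ih h (by omega)) hstep
    · have : a = b := by omega
      subst this
      exact hstep

lemma anti_chain {p : ℕ → ℕ} (h : ∀ i, p (i + 1) ≤ p i) : ∀ i i', i ≤ i' → p i' ≤ p i := by
  intro i i' hii'
  induction i' with
  | zero =>
    have : i = 0 := by omega
    subst this
    exact le_refl _
  | succ i' ih =>
    rcases Nat.eq_or_lt_of_le hii' with he | hlt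
    · rw [he]
    · exact le_trans (h i') (ih (by omega))

lemma RowSys.sum_len {g r : ℕ} {X : ℕ → ℕ → ℕ} {ℓ : ℕ → ℕ} {c : ℕ} (h : RowSys g r X ℓ)
    (hcont : ∀ k, 1 ≤ k → k ≤ g →
      ((Finset.range (r + 1)).filter (fun i => k ∈ Vrow (X i) (ℓ i))).card = c) :
    ∑ i ∈ Finset.range (r + 1), ℓ i = g * c := by
  classical
  have e1 : ∀ i ∈ Finset.range (r + 1),
      ℓ i = ∑ k ∈ Finset.Icc 1 g, (if k ∈ Vrow (X i) (ℓ i) then 1 else 0) := by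
    intro i hi
    rw [← Finset.card_filter]
    have he : (Finset.Icc 1 g).filter (fun k => k ∈ Vrow (X i) (ℓ i)) = Vrow (X i) (ℓ i) := by
      ext x
      simp only [Finset.mem_filter]
      exact ⟨fun hh => hh.2, fun hh => ⟨h.Vrow_subset (Finset.mem_range.1 hi) hh, hh⟩⟩
    rw [he, card_Vrow (h.2.1 i (Finset.mem_range.1 hi))]
  rw [Finset.sum_congr rfl e1, Finset.sum_comm]
  have e2 : ∀ k ∈ Finset.Icc 1 g,
      ∑ i ∈ Finset.range (r + 1), (if k ∈ Vrow (X i) (ℓ i) then 1 else 0) = c := by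
    intro k hk
    rw [← Finset.card_filter]
    exact hcont k (Finset.mem_Icc.1 hk).1 (Finset.mem_Icc.1 hk).2
  rw [Finset.sum_congr rfl e2, Finset.sum_const, Nat.card_Icc, smul_eq_mul]
  have : g + 1 - 1 = g := by omega
  rw [this]

noncomputable def psiInv (g r d : ℕ) (P : ℕ → ℕ → ℕ) : ℕ → ℕ → ℕ :=
  if d ≤ g + r then rem (g + r - d) P else prep r (d - (g + r)) P

/-! ### Layer 5: the main L → T direction -/

lemma LT_main {g r d n q K : ℕ} (hr : 1 ≤ r) (hd : r ≤ d)
    (hq : d / r = q) (hdq : d = r * q) (hq1 : 1 ≤ q)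
    (hK : n - r - 1 = K) (hKeq : K + g + r = d + q)
    {B R : ℕ → ℕ → ℕ} (hBR : (B, R) ∈ LSet g r d n) :
    (psi g r d B, phiMap g r R) ∈ TSet g r d ∧
      psiInv g r d (psi g r d B) = B ∧ phiMap g r (phiMap g r R) = R := by
  obtain ⟨⟨hBss, hBbd, hRtr, hRwide, hBzero, hcompat⟩, hBwidth, hBnostrip⟩ := hBR
  -- red row lengths
  have hRiff : ∀ i j, R i j ≠ 0 ↔ i < r + 1 ∧ j < rowLen R i := by
    intro i j
    by_cases hi : i < r + 1
    · have h1 := rowLen_iff (fun j' => hRtr.1 i j') (hRwide i (d - r) le_rfl) j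
      constructor
      · intro h
        exact ⟨hi, h1.1 h⟩
      · intro h
        exact h1.2 h.2
    · constructor
      · intro h
        exact absurd (hRtr.2.2.1 i j (by omega)) h
      · intro h
        omega
  have hρdr : ∀ i, rowLen R i ≤ d - r := fun i => rowLen_le (hRwide i (d - r) le_rfl)
  have hRS : RowSys g r R (rowLen R) := by
    refine ⟨hRiff, ?_, hRtr.2.2.2.2.2.1⟩
    intro i hi a b hab hb
    exact strict_of_adj
      (fun j => ⟨fun h => ((hRiff i j).1 h).2, fun h => (hRiff i j).2 ⟨hi, h⟩⟩)
      (fun j h => hRtr.2.2.2.1 i j h) a b hab hb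
  have hρg : ∀ i, i < r + 1 → rowLen R i ≤ g := fun i hi => hRS.len_le i hi
  have hcont : ∀ k, 1 ≤ k → k ≤ g →
      ((Finset.range (r + 1)).filter (fun i => k ∈ Vrow (R i) (rowLen R i))).card = r := by
    intro k hk1 hkg
    have h1 := hRS.ncard_value (k := k) (by omega)
    rw [hRtr.2.2.2.2.2.2 k hk1 hkg] at h1
    omega
  have hρmono : ∀ i, i < r → rowLen R i ≤ rowLen R (i + 1) := by
    intro i hi
    by_contra hcm
    push_neg at hcm
    have h1 : R i (rowLen R (i + 1)) ≠ 0 := (hRiff i _).2 ⟨by omega, by omega⟩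
    have h2 := hRtr.2.1 i _ hi h1
    have h3 := ((hRiff (i + 1) _).1 h2).2
    omega
  have hcolsR : ∀ i, i < r → ∀ l, l < rowLen R i → R (i + 1) l ≤ R i l := by
    intro i hi l hl
    have h1 : R i l ≠ 0 := (hRiff i l).2 ⟨by omega, hl⟩
    have h2 : R (i + 1) l ≠ 0 := (hRiff (i + 1) l).2 ⟨by omega, by have := hρmono i hi; omega⟩
    exact hRtr.2.2.2.2.1 i l h1 h2
  -- blue row lengths: complement
  have hBiff : ∀ i j, B i j ≠ 0 ↔ i < r + 1 ∧ j < (d - r) - rowLen R i := by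
    intro i j
    by_cases hi : i < r + 1
    · by_cases hj : j < d - r
      · rw [hcompat i j hi hj]
        have hiffR := hRiff i (d - r - 1 - j)
        have hdr := hρdr i
        constructor
        · intro h0
          refine ⟨hi, ?_⟩
          by_contra hc2
          exact (hiffR.2 ⟨hi, by omega⟩) h0
        · rintro ⟨-, h2⟩
          by_contra hc2
          have := (hiffR.1 hc2).2
          omega
      · constructor
        · intro h
          exact absurd (hBzero i j (Or.inr (by omega))) h
        · intro h
          have := hρdr i
          omega
    · constructor
      · intro h
        exact absurd (hBzero i j (Or.inl (by omega))) h
      · intro h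
        omega
  have hbK : ∀ i, i < r + 1 → (d - r) - rowLen R i ≤ K := by
    intro i hi
    by_contra hc2
    push_neg at hc2
    have h1 : B i K ≠ 0 := (hBiff i K).2 ⟨hi, by omega⟩
    exact h1 (hBwidth i K (by omega))
  -- the recording side Q := phiMap R
  have hQiff := hRS.phi_ne_iff
  have hQRS := hRS.phi
  have hQsyt : IsSYT g (phiMap g r R) := by
    refine ⟨⟨?_, ?_, ?_, ?_⟩, ?_, hQRS.2.2, ?_⟩
    · intro i j hne
      have h1 := (hQiff i (j + 1)).1 hne
      exact (hQiff i j).2 ⟨h1.1, by omega⟩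
    · intro i j hne
      have h1 := (hQiff (i + 1) j).1 hne
      have hm := hρmono i (by omega)
      exact (hQiff i j).2 ⟨by omega, by omega⟩
    · intro i j hne
      have h1 := (hQiff i (j + 1)).1 hne
      exact le_of_lt (hQRS.2.1 i h1.1 j (j + 1) (by omega) h1.2)
    · intro i j hne
      have h1 := (hQiff (i + 1) j).1 hne
      exact hRS.phi_col_strict hcont h1.1 (hρmono i (by omega)) (hcolsR i (by omega)) j h1.2
    · intro i j hne
      have h1 := (hQiff i (j + 1)).1 hne
      exact hQRS.2.1 i h1.1 j (j + 1) (by omega) h1.2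
    · intro k hk1 hkg
      rw [hQRS.ncard_value (by omega)]
      have hc1 := hRS.content_phi hk1 hkg
      rw [hcont k hk1 hkg] at hc1
      omega
  have hphiphi : phiMap g r (phiMap g r R) = R := hRS.phi_phi
  -- sum of red row lengths
  have hsum : ∑ i ∈ Finset.range (r + 1), rowLen R i = g * r := hRS.sum_len hcont
  -- case split for psi
  by_cases hc : d ≤ g + r
  · -- prepend g + r - d full columns
    have hpsi : psi g r d B = prep r (g + r - d) B := by
      rw [psi_eq, if_pos hc]
    have hPiff : ∀ i j, psi g r d B i j ≠ 0 ↔ i < r + 1 ∧ j < g - rowLen R i := by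
      intro i j
      rw [hpsi, prep_ne_iff hBiff i j]
      by_cases hi : i < r + 1
      · have h1 := hρdr i
        have h2 := hρg i hi
        omega
      · omega
    have hPss : IsSSYT (psi g r d B) := by
      rw [hpsi]
      exact isSSYT_prep hBss hBbd
    have hPbd : ∀ i j, psi g r d B i j ≠ 0 → psi g r d B i j ≤ r + 1 := by
      rw [hpsi]
      exact prep_bd hBbd
    have hsizeP : tabSize (psi g r d B) = g := by
      rw [tabSize_eq_sum hPiff]
      have h2 : (∑ i ∈ Finset.range (r + 1), (g - rowLen R i))
          + (∑ i ∈ Finset.range (r + 1), rowLen R i)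
          = ∑ i ∈ Finset.range (r + 1), g := by
        rw [← Finset.sum_add_distrib]
        apply Finset.sum_congr rfl
        intro i hi
        have := hρg i (Finset.mem_range.1 hi)
        omega
      rw [Finset.sum_const, Finset.card_range, smul_eq_mul] at h2
      have h3 : (r + 1) * g = r * g + g := by ring
      have h4 : g * r = r * g := by ring
      omega
    have hPq : psi g r d B 0 (d / r) = 0 := by
      by_contra h0
      have h1 := ((hPiff 0 (d / r)).1 h0).2
      have h2 := hbK 0 (by omega)
      have h3 := hρdr 0
      rw [hq] at h1
      omega
    have hPfull : ∀ j, j < g + r - d → psi g r d B r j ≠ 0 := by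
      intro j hj
      refine (hPiff r j).2 ⟨by omega, ?_⟩
      have := hρdr r
      omega
    have hPstrip : ∀ i, 1 ≤ i → i ≤ r → ¬HasIStrip (psi g r d B) i (d / r) := by
      intro i hi1 hir hstrip
      rw [hpsi, hq, show q = K + (g + r - d) from by omega] at hstrip
      rw [hasIStrip_prep_iff hBss hBbd hi1 hir] at hstrip
      exact hBnostrip i hi1 hir (by rwa [hK])
    have hshape : SameShape (psi g r d B) (phiMap g r R) := by
      intro i j
      rw [hPiff, hQiff]
    have hinv1 : psiInv g r d (psi g r d B) = B := by
      rw [hpsi, psiInv, if_pos hc, rem_prep]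
    exact ⟨⟨⟨hPss, hsizeP, hPbd, hPq, hPfull, hPstrip⟩, hQsyt, hshape⟩, hinv1, hphiphi⟩
  · -- remove d - (g + r) full columns
    push_neg at hc
    have hBzero' : ∀ i j, r + 1 ≤ i → B i j = 0 := by
      intro i j hi
      by_contra h0
      have := ((hBiff i j).1 h0).1
      omega
    have hfullB : ∀ i j, i < r + 1 → j < d - (g + r) → B i j = i + 1 := by
      intro i j hi hj
      have hBr : B r j ≠ 0 := by
        refine (hBiff r j).2 ⟨by omega, ?_⟩
        have := hρg r (by omega)
        omega
      exact full_col hBss hBbd hBr i (by omega)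
    have hpsi : psi g r d B = rem (d - (g + r)) B := by
      rw [psi_eq, if_neg (by omega)]
    have hPiff : ∀ i j, psi g r d B i j ≠ 0 ↔ i < r + 1 ∧ j < g - rowLen R i := by
      intro i j
      rw [hpsi, rem_ne_iff hBiff i j]
      by_cases hi : i < r + 1
      · have h1 := hρdr i
        have h2 := hρg i hi
        omega
      · omega
    have hPss : IsSSYT (psi g r d B) := by
      rw [hpsi]
      exact isSSYT_rem hBss
    have hPbd : ∀ i j, psi g r d B i j ≠ 0 → psi g r d B i j ≤ r + 1 := by
      rw [hpsi]
      exact rem_bd hBbd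
    have hsizeP : tabSize (psi g r d B) = g := by
      rw [tabSize_eq_sum hPiff]
      have h2 : (∑ i ∈ Finset.range (r + 1), (g - rowLen R i))
          + (∑ i ∈ Finset.range (r + 1), rowLen R i)
          = ∑ i ∈ Finset.range (r + 1), g := by
        rw [← Finset.sum_add_distrib]
        apply Finset.sum_congr rfl
        intro i hi
        have := hρg i (Finset.mem_range.1 hi)
        omega
      rw [Finset.sum_const, Finset.card_range, smul_eq_mul] at h2
      have h3 : (r + 1) * g = r * g + g := by ring
      have h4 : g * r = r * g := by ring
      omega
    have hPq : psi g r d B 0 (d / r) = 0 := by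
      by_contra h0
      have h1 := ((hPiff 0 (d / r)).1 h0).2
      have h2 := hbK 0 (by omega)
      have h3 := hρdr 0
      rw [hq] at h1
      omega
    have hPfull : ∀ j, j < g + r - d → psi g r d B r j ≠ 0 := by
      intro j hj
      omega
    have hBeq : prep r (d - (g + r)) (rem (d - (g + r)) B) = B := prep_rem hfullB hBzero'
    have hPstrip : ∀ i, 1 ≤ i → i ≤ r → ¬HasIStrip (psi g r d B) i (d / r) := by
      intro i hi1 hir hstrip
      rw [hpsi, hq] at hstrip
      have hiff2 := hasIStrip_prep_iff (T := rem (d - (g + r)) B) (m := d - (g + r))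
        (isSSYT_rem hBss) (rem_bd hBbd) hi1 hir (ℓ := q)
      rw [hBeq] at hiff2
      have h5 := hiff2.2 hstrip
      rw [show q + (d - (g + r)) = K from by omega] at h5
      exact hBnostrip i hi1 hir (by rwa [hK])
    have hshape : SameShape (psi g r d B) (phiMap g r R) := by
      intro i j
      rw [hPiff, hQiff]
    have hinv1 : psiInv g r d (psi g r d B) = B := by
      rw [hpsi, psiInv, if_neg (by omega), hBeq]
    exact ⟨⟨⟨hPss, hsizeP, hPbd, hPq, hPfull, hPstrip⟩, hQsyt, hshape⟩, hinv1, hphiphi⟩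

/-! ### Layer 6: the main T → L direction -/

lemma TL_main {g r d n q K : ℕ} (hr : 1 ≤ r) (hd : r ≤ d)
    (hq : d / r = q) (hdq : d = r * q) (hq1 : 1 ≤ q)
    (hK : n - r - 1 = K) (hKeq : K + g + r = d + q)
    {P Q : ℕ → ℕ → ℕ} (hPQ : (P, Q) ∈ TSet g r d) :
    (psiInv g r d P, phiMap g r Q) ∈ LSet g r d n ∧
      psi g r d (psiInv g r d P) = P ∧ phiMap g r (phiMap g r Q) = Q := by
  obtain ⟨hPmem, hQsyt, hshape⟩ := hPQ
  obtain ⟨hPss, hPsize, hPbd, hPwidth, hPfull, hPstrip⟩ := hPmem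
  obtain ⟨hQss, hQrows, hQbd, hQcont⟩ := hQsyt
  have hProwzero : ∀ i, P i (d / r) = 0 := by
    intro i
    by_contra h0
    exact (col_prefix hPss 0 i (d / r) (by omega) h0) hPwidth
  have hPiff : ∀ i j, P i j ≠ 0 ↔ i < r + 1 ∧ j < rowLen P i := by
    intro i j
    by_cases hi : i < r + 1
    · have h1 := rowLen_iff (fun j' => hPss.1 i j') (hProwzero i) j
      exact ⟨fun h => ⟨hi, h1.1 h⟩, fun h => h1.2 h.2⟩
    · exact ⟨fun h => absurd (zero_of_row_ge hPss hPbd i j (by omega)) h, fun h => by omega⟩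
  have hp_le_q : ∀ i, rowLen P i ≤ q := by
    intro i
    have := rowLen_le (hProwzero i)
    omega
  have hp_anti : ∀ i, rowLen P (i + 1) ≤ rowLen P i := by
    intro i
    by_contra h0
    push_neg at h0
    have hi1 : i + 1 < r + 1 := by
      by_contra hc2
      have h2 : P (i + 1) 0 = 0 := zero_of_row_ge hPss hPbd _ 0 (by omega)
      have h3 := rowLen_le h2
      omega
    have h1 : P (i + 1) (rowLen P i) ≠ 0 := (hPiff (i + 1) _).2 ⟨hi1, h0⟩
    have h2 := hPss.2.1 i _ h1
    have h3 := ((hPiff i _).1 h2).2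
    omega
  have hp_chain := anti_chain hp_anti
  have hp_ge : ∀ i, i < r + 1 → g + r - d ≤ rowLen P i := by
    intro i hi
    rcases Nat.eq_zero_or_pos (g + r - d) with h0 | h0
    · omega
    · have h1 : P r (g + r - d - 1) ≠ 0 := hPfull _ (by omega)
      have h2 := ((hPiff r _).1 h1).2
      have := hp_chain i r (by omega)
      omega
  have hQiff : ∀ i j, Q i j ≠ 0 ↔ i < r + 1 ∧ j < rowLen P i := by
    intro i j
    rw [← hshape i j]
    exact hPiff i j
  have hQRS : RowSys g r Q (rowLen P) := by
    refine ⟨hQiff, ?_, hQbd⟩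
    intro i hi a b hab hb
    exact strict_of_adj
      (fun j => ⟨fun h => ((hQiff i j).1 h).2, fun h => (hQiff i j).2 ⟨hi, h⟩⟩)
      (fun j h => hQrows i j h) a b hab hb
  have hp_le_g : ∀ i, i < r + 1 → rowLen P i ≤ g := hQRS.len_le
  have hQcont' : ∀ k, 1 ≤ k → k ≤ g →
      ((Finset.range (r + 1)).filter (fun i => k ∈ Vrow (Q i) (rowLen P i))).card = 1 := by
    intro k hk1 hkg
    have h1 := hQRS.ncard_value (k := k) (by omega)
    rw [hQcont k hk1 hkg] at h1
    omega
  have hRRS := hQRS.phi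
  have hRiff := hQRS.phi_ne_iff
  have hphiphiQ : phiMap g r (phiMap g r Q) = Q := hQRS.phi_phi
  have hRtr : IsTrSSYT g r (phiMap g r Q) := by
    refine ⟨?_, ?_, ?_, ?_, ?_, hRRS.2.2, ?_⟩
    · intro i j hne
      have h1 := (hRiff i (j + 1)).1 hne
      exact (hRiff i j).2 ⟨h1.1, by omega⟩
    · intro i j hi hne
      have h1 := (hRiff i j).1 hne
      have := hp_anti i
      exact (hRiff (i + 1) j).2 ⟨by omega, by omega⟩
    · intro i j hi
      by_contra h0
      have := ((hRiff i j).1 h0).1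
      omega
    · intro i j hne
      have h1 := (hRiff i (j + 1)).1 hne
      exact hRRS.2.1 i h1.1 j (j + 1) (by omega) h1.2
    · intro i j hne hne'
      have h1 := (hRiff i j).1 hne
      have h1' := (hRiff (i + 1) j).1 hne'
      refine hQRS.phi_col_mono h1'.1 (hp_anti i) ?_ j h1.2
      intro l hl
      exact hQss.2.2.2 i l ((hQiff (i + 1) l).2 ⟨h1'.1, hl⟩)
    · intro k hk1 hkg
      rw [hRRS.ncard_value (by omega)]
      have hc1 := hQRS.content_phi hk1 hkg
      rw [hQcont' k hk1 hkg] at hc1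
      omega
  have hRwide : ∀ i j, d - r ≤ j → phiMap g r Q i j = 0 := by
    intro i j hj
    by_contra h0
    have h1 := (hRiff i j).1 h0
    have h2 := hp_ge i h1.1
    omega
  by_cases hcs : d ≤ g + r
  · have hBdef : psiInv g r d P = rem (g + r - d) P := by
      rw [psiInv, if_pos hcs]
    have hBiff : ∀ i j, psiInv g r d P i j ≠ 0 ↔
        i < r + 1 ∧ j < (d - r) - (g - rowLen P i) := by
      intro i j
      rw [hBdef, rem_ne_iff hPiff i j]
      by_cases hi : i < r + 1
      · have h1 := hp_le_g i hi
        have h2 := hp_ge i hi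
        omega
      · omega
    have hBss : IsSSYT (psiInv g r d P) := by
      rw [hBdef]
      exact isSSYT_rem hPss
    have hBbd : ∀ i j, psiInv g r d P i j ≠ 0 → psiInv g r d P i j ≤ r + 1 := by
      rw [hBdef]
      exact rem_bd hPbd
    have hLT : IsLTableau g r d (psiInv g r d P) (phiMap g r Q) := by
      refine ⟨hBss, hBbd, hRtr, hRwide, ?_, ?_⟩
      · intro i j hij
        by_contra h0
        have h1 := (hBiff i j).1 h0
        omega
      · intro i j hi hj
        constructor
        · intro h0
          have h1 := (hBiff i j).1 h0
          by_contra h2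
          have h3 := ((hRiff i (d - r - 1 - j)).1 h2).2
          omega
        · intro h0
          refine (hBiff i j).2 ⟨hi, ?_⟩
          by_contra h2
          have h3 : phiMap g r Q i (d - r - 1 - j) ≠ 0 := by
            refine (hRiff i _).2 ⟨hi, ?_⟩
            have h4 := hp_le_g i hi
            have h5 := hp_ge i hi
            omega
          exact h3 h0
    have hwidthB : ∀ i j, n - r - 1 ≤ j → psiInv g r d P i j = 0 := by
      intro i j hj
      rw [hK] at hj
      by_contra h0
      have h1 := (hBiff i j).1 h0
      have h2 := hp_le_q i
      omega
    have hfullP : ∀ i j, i < r + 1 → j < g + r - d → P i j = i + 1 := by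
      intro i j hi hj
      exact full_col hPss hPbd (hPfull j hj) i (by omega)
    have hPeq : prep r (g + r - d) (rem (g + r - d) P) = P :=
      prep_rem hfullP (zero_of_row_ge hPss hPbd)
    have hBnostrip : ∀ i, 1 ≤ i → i ≤ r → ¬HasIStrip (psiInv g r d P) i (n - r - 1) := by
      intro i hi1 hir hstrip
      rw [hBdef, hK] at hstrip
      have hiff2 := hasIStrip_prep_iff (T := rem (g + r - d) P) (m := g + r - d)
        (isSSYT_rem hPss) (rem_bd hPbd) hi1 hir (ℓ := K)
      rw [hPeq] at hiff2
      have h5 := hiff2.2 hstrip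
      rw [show K + (g + r - d) = q from by omega] at h5
      exact hPstrip i hi1 hir (by rwa [hq])
    have hback : psi g r d (psiInv g r d P) = P := by
      rw [hBdef, psi_eq, if_pos hcs, hPeq]
    exact ⟨⟨hLT, hwidthB, hBnostrip⟩, hback, hphiphiQ⟩
  · have hBdef : psiInv g r d P = prep r (d - (g + r)) P := by
      rw [psiInv, if_neg hcs]
    have hBiff : ∀ i j, psiInv g r d P i j ≠ 0 ↔
        i < r + 1 ∧ j < (d - r) - (g - rowLen P i) := by
      intro i j
      rw [hBdef, prep_ne_iff hPiff i j]
      by_cases hi : i < r + 1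
      · have h1 := hp_le_g i hi
        omega
      · omega
    have hBss : IsSSYT (psiInv g r d P) := by
      rw [hBdef]
      exact isSSYT_prep hPss hPbd
    have hBbd : ∀ i j, psiInv g r d P i j ≠ 0 → psiInv g r d P i j ≤ r + 1 := by
      rw [hBdef]
      exact prep_bd hPbd
    have hLT : IsLTableau g r d (psiInv g r d P) (phiMap g r Q) := by
      refine ⟨hBss, hBbd, hRtr, hRwide, ?_, ?_⟩
      · intro i j hij
        by_contra h0
        have h1 := (hBiff i j).1 h0
        omega
      · intro i j hi hj
        constructor
        · intro h0
          have h1 := (hBiff i j).1 h0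
          by_contra h2
          have h3 := ((hRiff i (d - r - 1 - j)).1 h2).2
          omega
        · intro h0
          refine (hBiff i j).2 ⟨hi, ?_⟩
          by_contra h2
          have h3 : phiMap g r Q i (d - r - 1 - j) ≠ 0 := by
            refine (hRiff i _).2 ⟨hi, ?_⟩
            have h4 := hp_le_g i hi
            have h5 := hp_ge i hi
            omega
          exact h3 h0
    have hwidthB : ∀ i j, n - r - 1 ≤ j → psiInv g r d P i j = 0 := by
      intro i j hj
      rw [hK] at hj
      by_contra h0
      have h1 := (hBiff i j).1 h0
      have h2 := hp_le_q i
      have h3 := hp_le_g i h1.1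
      omega
    have hBnostrip : ∀ i, 1 ≤ i → i ≤ r → ¬HasIStrip (psiInv g r d P) i (n - r - 1) := by
      intro i hi1 hir hstrip
      rw [hBdef, hK, show K = q + (d - (g + r)) from by omega] at hstrip
      have h5 := (hasIStrip_prep_iff hPss hPbd hi1 hir (ℓ := q) (m := d - (g + r))).1 hstrip
      exact hPstrip i hi1 hir (by rwa [hq])
    have hback : psi g r d (psiInv g r d P) = P := by
      rw [hBdef, psi_eq, if_neg (by omega), rem_prep]
    exact ⟨⟨hLT, hwidthB, hBnostrip⟩, hback, hphiphiQ⟩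

end LTaux

/-- The map `𝐋 = (B, R) ↦ (ψ(B), φ(R))` is a bijection from
`𝓛ʳ_{g,n,d}` to `𝒯ʳ_{g,n,d}`. -/
theorem L_to_T_bijOn (g r d n : ℕ) (hr : 1 ≤ r) (hd : r ≤ d) (hdvd : r ∣ d)
    (hineq : r * g ≤ (d - r) * (r + 1)) (hn : n + g = d + d / r + 1) :
    Set.BijOn
      (fun BR : (ℕ → ℕ → ℕ) × (ℕ → ℕ → ℕ) => (psi g r d BR.1, phiMap g r BR.2))
      (LSet g r d n) (TSet g r d) := by
  have hq : d / r = d / r := rfl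
  set q := d / r with hqdef
  have hdq : d = r * q := (Nat.mul_div_cancel' hdvd).symm
  have hq1 : 1 ≤ q := (Nat.one_le_div_iff (by omega)).2 hd
  obtain ⟨a, ha⟩ : ∃ a, q = a + 1 := ⟨q - 1, by omega⟩
  have he0 : r * (a + 1) = r * a + r := by ring
  have hd2 : d = r * a + r := by rw [hdq, ha]; ring
  have hdr : d - r = r * a := by omega
  have hprod : (r * a) * (r + 1) = r * (a * (r + 1)) := by ring
  rw [hdr, hprod] at hineq
  have hg : g ≤ a * (r + 1) := Nat.le_of_mul_le_mul_left hineq (by omega)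
  have he2 : r * a + r + (a + 1) + 1 = a * (r + 1) + (r + 2) := by ring
  have hn2 : r + 2 ≤ n := by omega
  have hKeq : (n - r - 1) + g + r = d + q := by omega
  refine Set.InvOn.bijOn (f' := fun PQ : (ℕ → ℕ → ℕ) × (ℕ → ℕ → ℕ) =>
    (LTaux.psiInv g r d PQ.1, phiMap g r PQ.2)) ⟨?_, ?_⟩ ?_ ?_
  · rintro ⟨B, R⟩ hBR
    obtain ⟨-, h1, h2⟩ := LTaux.LT_main hr hd rfl hdq hq1 rfl hKeq hBR
    simp only [Prod.mk.injEq]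
    exact ⟨h1, h2⟩
  · rintro ⟨P, Q⟩ hPQ
    obtain ⟨-, h1, h2⟩ := LTaux.TL_main hr hd rfl hdq hq1 rfl hKeq hPQ
    simp only [Prod.mk.injEq]
    exact ⟨h1, h2⟩
  · rintro ⟨B, R⟩ hBR
    exact (LTaux.LT_main hr hd rfl hdq hq1 rfl hKeq hBR).1
  · rintro ⟨P, Q⟩ hPQ
    exact (LTaux.TL_main hr hd rfl hdq hq1 rfl hKeq hPQ).1
end
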